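/- arXiv:1903.03197 — 9 statements merged into one kernel-verified Lean document; each statement's English description precedes it below -/
import Mathlib

section
/- Let G be a finite simple graph and let x and y be two distinct vertices of G having the same (open) neighborhood. Then G is well-indumatched if and only if the graph obtained from G by deleting the vertex y is well-indumatched. -/
open SimpleGraph

/-- `M` is an induced matching of `G`: a set of edges of `G` such that no two distinct
edges of `M` share an endpoint or have endpoints joined by an edge of `G`. -/
def IsInducedMatching {V : Type*} (G : SimpleGraph V) (M : Set (Sym2 V)) : Prop :=
  M ⊆ G.edgeSet ∧
    ∀ e ∈ M, ∀ f ∈ M, e ≠ f → ∀ u ∈ e, ∀ v ∈ f, u ≠ v ∧ ¬ G.Adj u v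

/-- `M` is a maximal induced matching of `G`. -/
def IsMaximalInducedMatching {V : Type*} (G : SimpleGraph V) (M : Set (Sym2 V)) : Prop :=
  IsInducedMatching G M ∧
    ∀ N : Set (Sym2 V), IsInducedMatching G N → M ⊆ N → N = M

section Aux
variable {V : Type*} {G : SimpleGraph V} {x y : V}

/-- lifting an induced matching of the induced subgraph to `G`. -/
lemma lift_induced {S : Set V} {N : Set (Sym2 S)}
    (h : IsInducedMatching (G.induce S) N) :
    IsInducedMatching G (Sym2.map (Subtype.val : S → V) '' N) := by
  obtain ⟨hsub, hcond⟩ := h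
  constructor
  · rintro e ⟨e₀, he₀, rfl⟩
    have := hsub he₀
    induction e₀ using Sym2.ind with
    | _ a b => simpa using this
  · rintro e ⟨e₀, he₀, rfl⟩ f ⟨f₀, hf₀, rfl⟩ hne u hu v hv
    rw [Sym2.mem_map] at hu hv
    obtain ⟨u₀, hu₀, rfl⟩ := hu
    obtain ⟨v₀, hv₀, rfl⟩ := hv
    have hne₀ : e₀ ≠ f₀ := by rintro rfl; exact hne rfl
    have := hcond e₀ he₀ f₀ hf₀ hne₀ u₀ hu₀ v₀ hv₀
    exact ⟨fun hh => this.1 (Subtype.val_injective hh), fun hh => this.2 (by simpa using hh)⟩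

lemma mem_rep {e : Sym2 V} (he : e ∈ G.edgeSet) (hy : y ∈ e) :
    ∃ z, z ≠ y ∧ G.Adj y z ∧ e = s(y, z) := by
  obtain ⟨z, rfl⟩ := Sym2.mem_iff_exists.mp hy
  rw [SimpleGraph.mem_edgeSet] at he
  exact ⟨z, fun hh => G.irrefl (hh ▸ he), he, rfl⟩

end Aux

section Aux2
variable {V : Type*} {G : SimpleGraph V} {x y : V}

lemma lift_maximal (hxy : x ≠ y) (hnadj : ¬ G.Adj x y)
    (hadj : ∀ u, G.Adj x u ↔ G.Adj y u)
    {N : Set (Sym2 {v : V | v ≠ y})}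
    (h : IsMaximalInducedMatching (G.induce {v : V | v ≠ y}) N) :
    IsMaximalInducedMatching G (Sym2.map (Subtype.val : {v : V | v ≠ y} → V) '' N) := by
  set L : Set (Sym2 V) := Sym2.map (Subtype.val : {v : V | v ≠ y} → V) '' N with hL
  refine ⟨lift_induced h.1, ?_⟩
  intro P hP hLP
  refine Set.Subset.antisymm ?_ hLP
  intro e heP
  by_contra heL
  -- case split on whether y ∈ e
  by_cases hy : y ∈ e
  · -- e = s(y, z); replace by s(x,z) which must be in N, contradiction
    obtain ⟨z, hzy, hyz, rfl⟩ := mem_rep (hP.1 heP) hy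
    have hxz : G.Adj x z := (hadj z).mpr hyz
    set e₀ : Sym2 {v : V | v ≠ y} := s(⟨x, hxy⟩, ⟨z, hzy⟩) with he₀
    have key : ∀ u ∈ e₀, ∀ g ∈ N, ∀ v ∈ g, (u : V) ≠ (v : V) ∧ ¬ G.Adj u v := by
      intro u hu g hg v hv
      have hgP : Sym2.map Subtype.val g ∈ P := hLP ⟨g, hg, rfl⟩
      have hneg : s(y, z) ≠ Sym2.map Subtype.val g := by
        intro hh
        have : y ∈ Sym2.map Subtype.val g := hh ▸ Sym2.mem_mk_left y z
        obtain ⟨a, _, ha⟩ := Sym2.mem_map.mp this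
        exact a.2 ha
      have hvP : (v : V) ∈ Sym2.map Subtype.val g := Sym2.mem_map.mpr ⟨v, hv, rfl⟩
      have hzv := hP.2 _ heP _ hgP hneg z (Sym2.mem_mk_right y z) v hvP
      have hyv := hP.2 _ heP _ hgP hneg y (Sym2.mem_mk_left y z) v hvP
      rcases Sym2.mem_iff.mp hu with rfl | rfl
      · refine ⟨fun hh => ?_, fun hh => hyv.2 ((hadj (v : V)).mp hh)⟩
        exact hzv.2 (by rw [show (x : V) = (v : V) from hh] at hxz; exact hxz.symm)
      · exact hzv
    have hind : IsInducedMatching (G.induce {v : V | v ≠ y}) (insert e₀ N) := by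
      constructor
      · rintro f (rfl | hf)
        · simpa [he₀] using hxz
        · exact h.1.1 hf
      · rintro f (rfl | hf) g (rfl | hg) hne u hu v hv
        · exact absurd rfl hne
        · have := key u hu g hg v hv
          exact ⟨fun hh => this.1 (congrArg _ hh), fun hh => this.2 (by simpa using hh)⟩
        · have := key v hv f hf u hu
          exact ⟨fun hh => this.1 (congrArg _ hh.symm), fun hh => this.2 (by simpa using hh.symm)⟩
        · exact h.1.2 f hf g hg hne u hu v hv
    have he₀N : e₀ ∈ N := by
      have := h.2 (insert e₀ N) hind (Set.subset_insert _ _)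
      rw [← this]; exact Set.mem_insert _ _
    -- then both s(y,z) and s(x,z) lie in P, sharing endpoint z: contradiction
    have hxzP : s(x, z) ∈ P := hLP ⟨e₀, he₀N, by simp [he₀]⟩
    have hne2 : s(y, z) ≠ s(x, z) := by
      intro hh
      have : y ∈ s(x, z) := hh ▸ Sym2.mem_mk_left y z
      rcases Sym2.mem_iff.mp this with rfl | rfl
      · exact hxy rfl
      · exact hzy rfl
    exact (hP.2 _ heP _ hxzP hne2 z (Sym2.mem_mk_right y z) z
      (Sym2.mem_mk_right x z)).1 rfl
  · -- e avoids y, so it descends to the induced subgraph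
    have heE := hP.1 heP
    induction e using Sym2.ind with
    | _ a b =>
      rw [SimpleGraph.mem_edgeSet] at heE
      have ha : a ≠ y := fun hh => hy (hh ▸ Sym2.mem_mk_left a b)
      have hb : b ≠ y := fun hh => hy (hh ▸ Sym2.mem_mk_right a b)
      set e₀ : Sym2 {v : V | v ≠ y} := s(⟨a, ha⟩, ⟨b, hb⟩) with he₀
      have hmape : Sym2.map (Subtype.val : {v : V | v ≠ y} → V) e₀ = s(a, b) := by
        simp [he₀]
      have key : ∀ u ∈ e₀, ∀ g ∈ N, ∀ v ∈ g, (u : V) ≠ (v : V) ∧ ¬ G.Adj u v := by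
        intro u hu g hg v hv
        have hgP : Sym2.map Subtype.val g ∈ P := hLP ⟨g, hg, rfl⟩
        have hneg : s(a, b) ≠ Sym2.map Subtype.val g := by
          intro hh
          exact heL ⟨g, hg, hh.symm⟩
        have huP : (u : V) ∈ s(a, b) := hmape ▸ Sym2.mem_map.mpr ⟨u, hu, rfl⟩
        have hvP : (v : V) ∈ Sym2.map Subtype.val g := Sym2.mem_map.mpr ⟨v, hv, rfl⟩
        exact hP.2 _ heP _ hgP hneg _ huP _ hvP
      have hind : IsInducedMatching (G.induce {v : V | v ≠ y}) (insert e₀ N) := by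
        constructor
        · rintro f (rfl | hf)
          · simpa [he₀] using heE
          · exact h.1.1 hf
        · rintro f (rfl | hf) g (rfl | hg) hne u hu v hv
          · exact absurd rfl hne
          · have := key u hu g hg v hv
            exact ⟨fun hh => this.1 (congrArg _ hh), fun hh => this.2 (by simpa using hh)⟩
          · have := key v hv f hf u hu
            exact ⟨fun hh => this.1 (congrArg _ hh.symm), fun hh => this.2 (by simpa using hh.symm)⟩
          · exact h.1.2 f hf g hg hne u hu v hv
      have he₀N : e₀ ∈ N := by
        have := h.2 (insert e₀ N) hind (Set.subset_insert _ _)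
        rw [← this]; exact Set.mem_insert _ _
      exact heL ⟨e₀, he₀N, hmape⟩

end Aux2
section Aux3
variable {V : Type*} {G : SimpleGraph V} {x y : V}

open Classical in
/-- send `y` to `x`, fix everything else. -/
noncomputable def swp (x y v : V) : V := if v = y then x else v

lemma swp_y : swp x y y = x := if_pos rfl

lemma swp_of_ne {v : V} (h : v ≠ y) : swp x y v = v := if_neg h

lemma swp_ne_y (hxy : x ≠ y) (v : V) : swp x y v ≠ y := by
  unfold swp; split
  · exact hxy
  · assumption

lemma swp_map_fix {e : Sym2 V} (hy : y ∉ e) : Sym2.map (swp x y) e = e := by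
  induction e using Sym2.ind with
  | _ a b =>
    have ha : a ≠ y := fun h => hy (h ▸ Sym2.mem_mk_left a b)
    have hb : b ≠ y := fun h => hy (h ▸ Sym2.mem_mk_right a b)
    rw [Sym2.map_pair_eq, swp_of_ne ha, swp_of_ne hb]

lemma swp_map_y {z : V} (hz : z ≠ y) : Sym2.map (swp x y) s(y, z) = s(x, z) := by
  rw [Sym2.map_pair_eq, swp_y, swp_of_ne hz]

lemma proj_exists (hxy : x ≠ y) (hnadj : ¬ G.Adj x y)
    (hadj : ∀ u, G.Adj x u ↔ G.Adj y u)
    {M : Set (Sym2 V)} (hM : IsMaximalInducedMatching G M) :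
    ∃ M' : Set (Sym2 {v : V | v ≠ y}),
      IsMaximalInducedMatching (G.induce {v : V | v ≠ y}) M' ∧ M'.ncard = M.ncard := by
  classical
  -- basic facts about M
  have hF1 : ∀ e ∈ M, y ∈ e → ∀ f ∈ M, x ∉ f := by
    intro e he hy f hf hx
    obtain ⟨z, hzy, hyz, rfl⟩ := mem_rep (hM.1.1 he) hy
    have hxz : G.Adj x z := (hadj z).mpr hyz
    by_cases hef : s(y, z) = f
    · rw [← hef] at hx
      rcases Sym2.mem_iff.mp hx with rfl | rfl
      · exact hxy rfl
      · exact G.irrefl hxz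
    · exact (hM.1.2 _ he _ hf hef z (Sym2.mem_mk_right y z) x hx).2 hxz.symm
  have hF2 : ∀ e ∈ M, y ∈ e → ∀ f ∈ M, y ∈ f → e = f := by
    intro e he hy f hf hy'
    by_contra hne
    exact (hM.1.2 _ he _ hf hne y hy y hy').1 rfl
  set M₀ : Set (Sym2 V) := Sym2.map (swp x y) '' M with hM₀
  have hM₀y : ∀ e ∈ M₀, y ∉ e := by
    rintro e ⟨e₁, _, rfl⟩ hye
    obtain ⟨a, _, ha⟩ := Sym2.mem_map.mp hye
    exact swp_ne_y hxy a ha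
  -- M₀ is an induced matching
  have hM₀ind : IsInducedMatching G M₀ := by
    constructor
    · rintro e ⟨e₁, he₁, rfl⟩
      by_cases hy : y ∈ e₁
      · obtain ⟨z, hzy, hyz, rfl⟩ := mem_rep (hM.1.1 he₁) hy
        rw [swp_map_y hzy, SimpleGraph.mem_edgeSet]
        exact (hadj z).mpr hyz
      · rw [swp_map_fix hy]; exact hM.1.1 he₁
    · rintro e ⟨e₁, he₁, rfl⟩ f ⟨f₁, hf₁, rfl⟩ hne u hu v hv
      have hne₁ : e₁ ≠ f₁ := by rintro rfl; exact hne rfl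
      obtain ⟨a, ha, rfl⟩ := Sym2.mem_map.mp hu
      obtain ⟨b, hb, rfl⟩ := Sym2.mem_map.mp hv
      have cond := hM.1.2 _ he₁ _ hf₁ hne₁ a ha b hb
      by_cases hay : a = y <;> by_cases hby : b = y
      · subst hay; subst hby
        exact absurd (hF2 _ he₁ ha _ hf₁ hb) hne₁
      · subst hay
        rw [swp_y, swp_of_ne hby]
        constructor
        · intro hh; exact hF1 _ he₁ ha _ hf₁ (hh ▸ hb)
        · intro hh; exact cond.2 ((hadj b).mp hh)
      · subst hby
        rw [swp_y, swp_of_ne hay]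
        constructor
        · intro hh; exact hF1 _ hf₁ hb _ he₁ (hh ▸ ha)
        · intro hh; exact cond.2 (((hadj a).mp hh.symm).symm)
      · rw [swp_of_ne hay, swp_of_ne hby]; exact cond
  -- M₀ is maximal
  have hM₀max : IsMaximalInducedMatching G M₀ := by
    refine ⟨hM₀ind, ?_⟩
    intro P hP hMP
    refine Set.Subset.antisymm ?_ hMP
    intro e heP
    by_contra heM₀
    have hne₀ : ∀ f₀ ∈ M₀, e ≠ f₀ := by rintro f₀ hf₀ rfl; exact heM₀ hf₀
    have keyc0 : ∀ u ∈ e, ∀ f₀ ∈ M₀, ∀ v ∈ f₀, u ≠ v ∧ ¬ G.Adj u v := by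
      intro u hu f₀ hf₀ v hv
      exact hP.2 _ heP _ (hMP hf₀) (hne₀ _ hf₀) u hu v hv
    -- e cannot contain y
    have hye : y ∉ e := by
      intro hye
      obtain ⟨w, hwy, hyw, hee⟩ := mem_rep (hP.1 heP) hye
      by_cases hyM : ∃ f ∈ M, y ∈ f
      · obtain ⟨f, hfM, hyf⟩ := hyM
        obtain ⟨z, hzy, hyz, rfl⟩ := mem_rep (hM.1.1 hfM) hyf
        have hfx : s(x, z) ∈ M₀ := ⟨_, hfM, swp_map_y hzy⟩
        have hw : w ∈ e := hee ▸ Sym2.mem_mk_right y w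
        have := (keyc0 w hw _ hfx x (Sym2.mem_mk_left x z)).2
        exact this (((hadj w).mpr hyw).symm)
      · -- no y-edge in M, so M₀ = M and e could be added to M: contradiction
        push_neg at hyM
        have hMeq : M₀ = M := by
          rw [hM₀]
          apply Set.Subset.antisymm
          · rintro f ⟨f₁, hf₁, rfl⟩; rw [swp_map_fix (hyM _ hf₁)]; exact hf₁
          · intro f hf; exact ⟨f, hf, swp_map_fix (hyM _ hf)⟩
        rw [hMeq] at heM₀ hne₀ keyc0
        have hins : IsInducedMatching G (insert e M) := by
          constructor
          · rintro f (rfl | hf)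
            · exact hP.1 heP
            · exact hM.1.1 hf
          · rintro f (rfl | hf) g' (rfl | hg) hne u hu v hv
            · exact absurd rfl hne
            · exact keyc0 u hu _ hg v hv
            · have := keyc0 v hv _ hf u hu
              exact ⟨this.1.symm, fun hh => this.2 hh.symm⟩
            · exact hM.1.2 _ hf _ hg hne u hu v hv
        have := hM.2 _ hins (Set.subset_insert _ _)
        exact heM₀ (by rw [← this]; exact Set.mem_insert _ _)
    -- now e avoids y; show M ∪ {e} is an induced matching of G
    have heM : e ∉ M := fun heM => heM₀ ⟨e, heM, swp_map_fix hye⟩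
    have hins : IsInducedMatching G (insert e M) := by
      have keyc : ∀ u ∈ e, ∀ f ∈ M, ∀ v ∈ f, u ≠ v ∧ ¬ G.Adj u v := by
        intro u hu f hf v hv
        by_cases hyf : y ∈ f
        · obtain ⟨z, hzy, hyz, rfl⟩ := mem_rep (hM.1.1 hf) hyf
          have hfx : s(x, z) ∈ M₀ := ⟨_, hf, swp_map_y hzy⟩
          rcases Sym2.mem_iff.mp hv with rfl | rfl
          · have := keyc0 u hu _ hfx x (Sym2.mem_mk_left x z)
            constructor
            · intro hh; exact hye (hh ▸ hu)
            · intro hh; exact this.2 (((hadj u).mpr hh.symm).symm)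
          · exact keyc0 u hu _ hfx v (Sym2.mem_mk_right x v)
        · exact keyc0 u hu _ ⟨f, hf, swp_map_fix hyf⟩ v hv
      constructor
      · rintro f (rfl | hf)
        · exact hP.1 heP
        · exact hM.1.1 hf
      · rintro f (rfl | hf) g' (rfl | hg) hne u hu v hv
        · exact absurd rfl hne
        · exact keyc u hu _ hg v hv
        · have := keyc v hv _ hf u hu
          exact ⟨this.1.symm, fun hh => this.2 hh.symm⟩
        · exact hM.1.2 _ hf _ hg hne u hu v hv
    have := hM.2 _ hins (Set.subset_insert _ _)
    have heMM : e ∈ M := by rw [← this]; exact Set.mem_insert _ _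
    exact heM heMM
  -- swp is injective on M
  have hinj : Set.InjOn (Sym2.map (swp x y)) M := by
    intro e he f hf hef
    by_cases hy : y ∈ e <;> by_cases hy' : y ∈ f
    · exact hF2 _ he hy _ hf hy'
    · obtain ⟨z, hzy, hyz, rfl⟩ := mem_rep (hM.1.1 he) hy
      rw [swp_map_y hzy, swp_map_fix hy'] at hef
      exact absurd (hef ▸ Sym2.mem_mk_left x z) (hF1 _ he (Sym2.mem_mk_left y z) _ hf)
    · obtain ⟨z, hzy, hyz, rfl⟩ := mem_rep (hM.1.1 hf) hy'
      rw [swp_map_y hzy, swp_map_fix hy] at hef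
      exact absurd (hef ▸ Sym2.mem_mk_left x z) (hF1 _ hf (Sym2.mem_mk_left y z) _ he)
    · rwa [swp_map_fix hy, swp_map_fix hy'] at hef
  -- descend M₀ to the induced subgraph
  set M' : Set (Sym2 {v : V | v ≠ y}) :=
    Sym2.map (Subtype.val : {v : V | v ≠ y} → V) ⁻¹' M₀ with hM'
  have himg : Sym2.map (Subtype.val : {v : V | v ≠ y} → V) '' M' = M₀ := by
    apply Set.Subset.antisymm
    · rintro e ⟨e₀, he₀, rfl⟩; exact he₀
    · intro e he
      have hy := hM₀y e he
      induction e using Sym2.ind with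
      | _ a b =>
        have ha : a ≠ y := fun h => hy (h ▸ Sym2.mem_mk_left a b)
        have hb : b ≠ y := fun h => hy (h ▸ Sym2.mem_mk_right a b)
        refine ⟨s(⟨a, ha⟩, ⟨b, hb⟩), ?_, by rw [Sym2.map_pair_eq]⟩
        show Sym2.map _ _ ∈ M₀
        rw [Sym2.map_pair_eq]; exact he
  have hvalinj : Function.Injective (Sym2.map (Subtype.val : {v : V | v ≠ y} → V)) :=
    Sym2.map.injective Subtype.val_injective
  refine ⟨M', ⟨?_, ?_⟩, ?_⟩
  · -- M' is an induced matching of the induced subgraph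
    constructor
    · intro e he
      have : Sym2.map Subtype.val e ∈ M₀ := he
      have hE := hM₀ind.1 this
      induction e using Sym2.ind with
      | _ a b =>
        rw [Sym2.map_pair_eq] at hE
        simpa using hE
    · intro e he f hf hne u hu v hv
      have hne' : Sym2.map Subtype.val e ≠ Sym2.map Subtype.val f :=
        fun hh => hne (hvalinj hh)
      have := hM₀ind.2 _ he _ hf hne' u (Sym2.mem_map.mpr ⟨u, hu, rfl⟩)
        v (Sym2.mem_map.mpr ⟨v, hv, rfl⟩)
      exact ⟨fun hh => this.1 (congrArg _ hh), fun hh => this.2 (by simpa using hh)⟩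
  · -- maximality of M'
    intro Q hQ hMQ
    have hQind := lift_induced hQ
    have hQsup : M₀ ⊆ Sym2.map Subtype.val '' Q := by
      rw [← himg]; exact Set.image_mono hMQ
    have := hM₀max.2 _ hQind hQsup
    apply Set.Subset.antisymm _ hMQ
    intro e heQ
    have : Sym2.map Subtype.val e ∈ M₀ := by
      rw [← this]; exact ⟨e, heQ, rfl⟩
    exact this
  · -- cardinality
    calc M'.ncard = (Sym2.map (Subtype.val : {v : V | v ≠ y} → V) '' M').ncard :=
          (Set.ncard_image_of_injective _ hvalinj).symm
      _ = M₀.ncard := by rw [himg]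
      _ = M.ncard := Set.ncard_image_of_injOn hinj

end Aux3

/-- `G` is well-indumatched: all of its maximal induced matchings have the same size. -/
def WellIndumatched {V : Type*} (G : SimpleGraph V) : Prop :=
  ∀ M N : Set (Sym2 V), IsMaximalInducedMatching G M → IsMaximalInducedMatching G N →
    M.ncard = N.ncard

/-- If `x` and `y` are distinct vertices of a finite graph `G` with the same open
neighborhood, then `G` is well-indumatched iff `G` minus the vertex `y` is
well-indumatched. -/
theorem stmt_0 {V : Type*} [Fintype V] (G : SimpleGraph V) (x y : V) (hxy : x ≠ y)
    (hnbr : G.neighborSet x = G.neighborSet y) :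
    WellIndumatched G ↔ WellIndumatched (G.induce {v : V | v ≠ y}) := by
  have hadj : ∀ u, G.Adj x u ↔ G.Adj y u := fun u => by
    have := Set.ext_iff.mp hnbr u
    simpa [SimpleGraph.mem_neighborSet] using this
  have hnadj : ¬ G.Adj x y := fun h => G.irrefl ((hadj y).mp h)
  constructor
  · intro hG M N hMm hNm
    have hM' := lift_maximal hxy hnadj hadj hMm
    have hN' := lift_maximal hxy hnadj hadj hNm
    have := hG _ _ hM' hN'
    rwa [Set.ncard_image_of_injective _ (Sym2.map.injective Subtype.val_injective),
      Set.ncard_image_of_injective _ (Sym2.map.injective Subtype.val_injective)] at this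
  · intro hG' M N hMm hNm
    obtain ⟨M', hM', hMc⟩ := proj_exists hxy hnadj hadj hMm
    obtain ⟨N', hN', hNc⟩ := proj_exists hxy hnadj hadj hNm
    rw [← hMc, ← hNc]
    exact hG' _ _ hM' hN'
end

section
/- Let G be a well-indumatched graph and let F0 be an induced matching of G. If F is the set of all edges of G covered by some edge of F0, then the spanning subgraph G \ F obtained from G by deleting the edges in F is well-indumatched. -/
open SimpleGraph

/-- The edge `e` covers the edge `f`: the distance between `e` and `f` is at most `1`,
i.e. some endpoint of `e` equals or is adjacent to some endpoint of `f`. -/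
def EdgeCovers {V : Type*} (G : SimpleGraph V) (e f : Sym2 V) : Prop :=
  ∃ u ∈ e, ∃ w ∈ f, u = w ∨ G.Adj u w

/-- If `G` is well-indumatched, `F0` is an induced matching of `G` and `F` is the set of
edges of `G` covered by some edge of `F0`, then the spanning subgraph `G \ F` is
well-indumatched. -/
theorem stmt_1 {V : Type*} [Fintype V] (G : SimpleGraph V) (hG : WellIndumatched G)
    (F0 : Set (Sym2 V)) (hF0 : IsInducedMatching G F0) :
    WellIndumatched
      (G.deleteEdges {f | f ∈ G.edgeSet ∧ ∃ e ∈ F0, EdgeCovers G e f}) := by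
  set F : Set (Sym2 V) := {f | f ∈ G.edgeSet ∧ ∃ e ∈ F0, EdgeCovers G e f} with hFdef
  set G' := G.deleteEdges F with hG'def
  have hEdge : G'.edgeSet = G.edgeSet \ F := SimpleGraph.edgeSet_deleteEdges F
  have hle : G' ≤ G := SimpleGraph.deleteEdges_le F
  have huncov : ∀ e ∈ G'.edgeSet, ∀ e0 ∈ F0, ¬ EdgeCovers G e0 e := by
    intro e he e0 he0 hcov
    rw [hEdge] at he
    exact he.2 ⟨he.1, e0, he0, hcov⟩
  have hself : ∀ e ∈ F0, EdgeCovers G e e := by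
    intro e he
    induction e using Sym2.ind with
    | _ u v => exact ⟨u, Sym2.mem_mk_left u v, u, Sym2.mem_mk_left u v, Or.inl rfl⟩
  have key : ∀ M : Set (Sym2 V), IsMaximalInducedMatching G' M →
      IsMaximalInducedMatching G (M ∪ F0) ∧ Disjoint M F0 := by
    intro M hM
    have hMsub : M ⊆ G'.edgeSet := hM.1.1
    have hdisj : Disjoint M F0 := by
      rw [Set.disjoint_left]
      intro e heM heF0
      exact huncov e (hMsub heM) e heF0 (hself e heF0)
    have hIM : IsInducedMatching G (M ∪ F0) := by
      constructor
      · intro e he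
        rcases he with he | he
        · exact ((hEdge ▸ hMsub he) : e ∈ G.edgeSet \ F).1
        · exact hF0.1 he
      · intro e he f hf hne u hu v hv
        rcases he with he | he <;> rcases hf with hf | hf
        · have h1 := hM.1.2 e he f hf hne u hu v hv
          refine ⟨h1.1, fun hadj => ?_⟩
          have hnadj : ¬ G'.Adj u v := h1.2
          rw [hG'def, SimpleGraph.deleteEdges_adj] at hnadj
          push_neg at hnadj
          obtain ⟨-, e0, he0, x, hx, w, hw, hxw⟩ := hnadj hadj
          rcases Sym2.mem_iff.mp hw with rfl | rfl
          · exact huncov e (hMsub he) e0 he0 ⟨x, hx, w, hu, hxw⟩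
          · exact huncov f (hMsub hf) e0 he0 ⟨x, hx, w, hv, hxw⟩
        · constructor
          · rintro rfl
            exact huncov e (hMsub he) f hf ⟨u, hv, u, hu, Or.inl rfl⟩
          · intro hadj
            exact huncov e (hMsub he) f hf ⟨v, hv, u, hu, Or.inr hadj.symm⟩
        · constructor
          · rintro rfl
            exact huncov f (hMsub hf) e he ⟨u, hu, u, hv, Or.inl rfl⟩
          · intro hadj
            exact huncov f (hMsub hf) e he ⟨u, hu, v, hv, Or.inr hadj⟩
        · exact hF0.2 e he f hf hne u hu v hv
    refine ⟨⟨hIM, ?_⟩, hdisj⟩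
    intro N hN hsub
    have hN'sub : N \ F0 ⊆ G'.edgeSet := by
      intro e he
      rw [hEdge]
      refine ⟨hN.1 he.1, ?_⟩
      rintro ⟨-, e0, he0, x, hx, w, hw, hxw⟩
      have hne : e0 ≠ e := by rintro rfl; exact he.2 he0
      have h := hN.2 e0 (hsub (Or.inr he0)) e he.1 hne x hx w hw
      rcases hxw with h' | h'
      · exact h.1 h'
      · exact h.2 h'
    have hN'IM : IsInducedMatching G' (N \ F0) := by
      refine ⟨hN'sub, ?_⟩
      intro e he f hf hne u hu v hv
      have h := hN.2 e he.1 f hf.1 hne u hu v hv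
      exact ⟨h.1, fun hadj => h.2 (hle hadj)⟩
    have hMN' : M ⊆ N \ F0 := by
      intro e heM
      exact ⟨hsub (Or.inl heM), fun heF0 => (Set.disjoint_left.mp hdisj heM) heF0⟩
    have heq : N \ F0 = M := hM.2 (N \ F0) hN'IM hMN'
    apply Set.Subset.antisymm _ hsub
    intro e heN
    by_cases heF0 : e ∈ F0
    · exact Or.inr heF0
    · exact Or.inl (heq ▸ (⟨heN, heF0⟩ : e ∈ N \ F0))
  intro M N hM hN
  obtain ⟨hM', hMd⟩ := key M hM
  obtain ⟨hN', hNd⟩ := key N hN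
  have h := hG _ _ hM' hN'
  rw [Set.ncard_union_eq hMd (Set.toFinite _) (Set.toFinite _),
      Set.ncard_union_eq hNd (Set.toFinite _) (Set.toFinite _)] at h
  omega
end

section
/- Let T be a finite tree with a longest path P = v1 v2 ... vk such that every vertex of P has degree at most 3 in T and every vertex of P of degree 3 is incident to a pendant edge. Then T is well-indumatched if and only if k ∈ {1,2,3,4}, or k = 7 and v4 has degree 2. -/
open SimpleGraph

set_option linter.unusedSectionVars false

namespace WIaux

open SimpleGraph Walk

variable {V : Type*} {G : SimpleGraph V} {a b : V}

lemma getVert_mem_support' (P : G.Walk a b) (i : ℕ) : P.getVert i ∈ P.support :=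
  mem_support_iff_exists_getVert.mpr (by
    by_cases h : i ≤ P.length
    · exact ⟨i, rfl, h⟩
    · exact ⟨P.length, by rw [P.getVert_of_length_le (le_of_not_ge h), P.getVert_length], le_rfl⟩)

lemma getVert_injOn' {P : G.Walk a b} (hP : P.IsPath) :
    ∀ i ≤ P.length, ∀ j ≤ P.length, P.getVert i = P.getVert j → i = j := by
  induction P with
  | nil => intro i hi j hj _; simp only [Walk.length_nil, Nat.le_zero] at hi hj; omega
  | cons h q ih =>
    intro i hi j hj hij
    have hq := hP.of_cons
    have hhead := ((Walk.cons_isPath_iff _ _).mp hP).2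
    cases i with
    | zero =>
      cases j with
      | zero => rfl
      | succ m =>
        exfalso
        rw [Walk.getVert_zero, Walk.getVert_cons_succ] at hij
        exact hhead (hij ▸ getVert_mem_support' q m)
    | succ n =>
      cases j with
      | zero =>
        exfalso
        rw [Walk.getVert_zero, Walk.getVert_cons_succ] at hij
        exact hhead (hij.symm ▸ getVert_mem_support' q n)
      | succ m =>
        rw [Walk.getVert_cons_succ, Walk.getVert_cons_succ] at hij
        simp only [Walk.length_cons] at hi hj
        exact congrArg Nat.succ (ih hq n (by omega) m (by omega) hij)

lemma subwalk (P : G.Walk a b) (hP : P.IsPath) :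
    ∀ (d i : ℕ), i + d ≤ P.length →
    ∃ Q : G.Walk (P.getVert i) (P.getVert (i + d)), Q.IsPath ∧ Q.length = d ∧
      ∀ x ∈ Q.support, ∃ m, i ≤ m ∧ m ≤ i + d ∧ x = P.getVert m := by
  intro d
  induction d with
  | zero =>
    intro i _
    exact ⟨Walk.nil, Walk.IsPath.nil, rfl, by
      intro x hx
      simp only [Walk.support_nil, List.mem_singleton] at hx
      exact ⟨i, le_rfl, by omega, hx⟩⟩
  | succ d ih =>
    intro i hle
    obtain ⟨Q, hQp, hQl, hQs⟩ := ih i (by omega)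
    have hadj : G.Adj (P.getVert (i + d)) (P.getVert (i + d + 1)) :=
      P.adj_getVert_succ (by omega)
    refine ⟨Q.concat hadj, ?_, ?_, ?_⟩
    · rw [Walk.isPath_def, Walk.support_concat]
      rw [List.nodup_append]
      refine ⟨?_, ?_, ?_⟩
      · exact hQp.support_nodup
      · simp
      · intro x hx y hx' hxy; subst hxy
        simp only [List.mem_singleton] at hx'
        obtain ⟨m, hm1, hm2, rfl⟩ := hQs x hx
        have := getVert_injOn' hP m (by omega) (i + d + 1) (by omega) hx'
        omega
    · rw [Walk.length_concat]; omega
    · intro x hx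
      rw [Walk.support_concat, List.mem_append] at hx
      rcases hx with hx | hx
      · obtain ⟨m, hm1, hm2, rfl⟩ := hQs x hx
        exact ⟨m, hm1, by omega, rfl⟩
      · simp only [List.mem_singleton] at hx
        exact ⟨i + d + 1, by omega, by omega, hx⟩

/-- A path between two spine vertices, staying on the spine. -/
lemma spine_path (P : G.Walk a b) (hP : P.IsPath) {i j : ℕ} (hij : i ≤ j) (hj : j ≤ P.length) :
    ∃ Q : G.Walk (P.getVert i) (P.getVert j), Q.IsPath ∧ Q.length = j - i ∧
      ∀ x ∈ Q.support, ∃ m, i ≤ m ∧ m ≤ j ∧ x = P.getVert m := by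
  have h := subwalk P hP (j - i) i (by omega)
  rwa [show i + (j - i) = j by omega] at h

lemma adj_spine (hT : G.IsTree) (P : G.Walk a b) (hP : P.IsPath) {i j : ℕ}
    (hij : i < j) (hj : j ≤ P.length) (hadj : G.Adj (P.getVert i) (P.getVert j)) :
    j = i + 1 := by
  obtain ⟨Q, hQp, hQl, _⟩ := spine_path P hP (le_of_lt hij) hj
  have hE : (Walk.cons hadj Walk.nil).IsPath := by
    simp only [Walk.cons_isPath_iff, Walk.isPath_iff_eq_nil, Walk.support_nil,
      List.mem_singleton]
    exact ⟨trivial, fun h => hadj.ne' h.symm⟩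
  have := hT.IsAcyclic.path_unique ⟨Q, hQp⟩ ⟨Walk.cons hadj Walk.nil, hE⟩
  have hlen : Q.length = (Walk.cons hadj (Walk.nil : G.Walk _ _)).length :=
    congrArg (fun (p : G.Path _ _) => p.1.length) this
  simp only [Walk.length_cons, Walk.length_nil] at hlen
  omega

lemma end_nbr0 (hT : G.IsTree) (P : G.Walk a b) (hP : P.IsPath)
    (hlong : ∀ (c d : V) (Q : G.Walk c d), Q.IsPath → Q.length ≤ P.length) :
    ∀ u, G.Adj a u → u = P.getVert 1 := by
  intro u hadj
  by_cases hu : u ∈ P.support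
  · obtain ⟨j, hgv, hjle⟩ := Walk.mem_support_iff_exists_getVert.mp hu
    subst hgv
    have h0 : G.Adj (P.getVert 0) (P.getVert j) := by rwa [P.getVert_zero]
    have hj0 : 0 < j := by
      rcases Nat.eq_zero_or_pos j with h | h
      · subst h; rw [P.getVert_zero] at h0; exact absurd rfl h0.ne
      · exact h
    have := adj_spine hT P hP hj0 hjle h0
    rw [this]
  · exfalso
    have hpath : (Walk.cons hadj.symm P).IsPath := by
      rw [Walk.cons_isPath_iff]; exact ⟨hP, hu⟩
    have := hlong _ _ _ hpath
    simp only [Walk.length_cons] at this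
    omega

lemma end_nbrn (hT : G.IsTree) (P : G.Walk a b) (hP : P.IsPath)
    (hlong : ∀ (c d : V) (Q : G.Walk c d), Q.IsPath → Q.length ≤ P.length) :
    ∀ u, G.Adj b u → u = P.getVert (P.length - 1) := by
  intro u hadj
  by_cases hu : u ∈ P.support
  · obtain ⟨j, hgv, hjle⟩ := Walk.mem_support_iff_exists_getVert.mp hu
    subst hgv
    have h0 : G.Adj (P.getVert P.length) (P.getVert j) := by rwa [P.getVert_length]
    have hjn : j < P.length := by
      rcases Nat.lt_or_ge j P.length with h | h
      · exact h
      · exfalso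
        have : P.getVert j = P.getVert P.length := by
          rw [P.getVert_of_length_le h, P.getVert_length]
        rw [this] at h0; exact h0.ne rfl
    have := adj_spine hT P hP hjn le_rfl h0.symm
    congr 1; omega
  · exfalso
    have hpath : (P.concat hadj).IsPath := by
      rw [Walk.isPath_def, Walk.support_concat, List.nodup_append]
      refine ⟨hP.support_nodup, List.nodup_singleton _, ?_⟩
      intro x hx y hx' hxy; subst hxy
      simp only [List.mem_singleton] at hx'
      subst hx'; exact hu hx
    have := hlong _ _ _ hpath
    rw [Walk.length_concat] at this
    omega

lemma off_nbr (hT : G.IsTree) (P : G.Walk a b) (hP : P.IsPath)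
    (hlong : ∀ (c d : V) (Q : G.Walk c d), Q.IsPath → Q.length ≤ P.length)
    [Fintype V] [DecidableRel G.Adj]
    (hdeg : ∀ u ∈ P.support, G.degree u ≤ 3)
    (hpend : ∀ u ∈ P.support, G.degree u = 3 → ∃ w, G.Adj u w ∧ G.degree w = 1) :
    ∀ i, 1 ≤ i → i + 1 ≤ P.length → ∀ w, G.Adj (P.getVert i) w → w ∉ P.support →
      ∀ z, G.Adj w z → z = P.getVert i := by
  classical
  intro i hi1 hin w hw hwoff z hz
  by_contra hne
  -- case 1 : z on the spine
  by_cases hzs : z ∈ P.support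
  · obtain ⟨j, hgv, hjle⟩ := Walk.mem_support_iff_exists_getVert.mp hzs
    subst hgv
    have hij : i ≠ j := fun h => hne (by rw [h])
    -- two distinct paths from getVert i to getVert j
    have hR : (Walk.cons hw (Walk.cons hz Walk.nil)).IsPath := by
      rw [Walk.cons_isPath_iff, Walk.cons_isPath_iff]
      refine ⟨⟨Walk.IsPath.nil, by
        simp only [Walk.support_nil, List.mem_singleton]
        exact fun h => hwoff (h ▸ getVert_mem_support' P j)⟩, ?_⟩
      simp only [Walk.support_cons, Walk.support_nil, List.mem_cons, List.mem_singleton]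
      push_neg
      refine ⟨fun h => hw.ne h, fun h => ?_, List.not_mem_nil⟩
      exact hij (getVert_injOn' hP i (by omega) j hjle h)
    -- spine path between them
    rcases Nat.lt_or_ge i j with hlt | hge
    · obtain ⟨Q, hQp, _, hQs⟩ := spine_path P hP (le_of_lt hlt) hjle
      have := hT.IsAcyclic.path_unique ⟨Q, hQp⟩ ⟨_, hR⟩
      have hmem : w ∈ Q.support := by
        rw [Subtype.mk_eq_mk.mp this]
        simp [Walk.support_cons]
      obtain ⟨m, _, _, hm⟩ := hQs w hmem
      exact hwoff (hm ▸ getVert_mem_support' P m)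
    · have hlt : j < i := by omega
      obtain ⟨Q, hQp, _, hQs⟩ := spine_path P hP (le_of_lt hlt) (by omega)
      have := hT.IsAcyclic.path_unique ⟨Q.reverse, hQp.reverse⟩ ⟨_, hR⟩
      have hmem : w ∈ Q.reverse.support := by
        rw [Subtype.mk_eq_mk.mp this]
        simp [Walk.support_cons]
      rw [Walk.support_reverse, List.mem_reverse] at hmem
      obtain ⟨m, _, _, hm⟩ := hQs w hmem
      exact hwoff (hm ▸ getVert_mem_support' P m)
  -- case 2 : z off the spine
  · have hzw : z ≠ w := fun h => G.irrefl (h ▸ hz)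
    -- getVert i has degree 3 with neighbours v(i-1), v(i+1), w
    have hd1 : P.getVert (i-1) ≠ P.getVert (i+1) := fun h => by
      have := getVert_injOn' hP (i-1) (by omega) (i+1) (by omega) h; omega
    have hna : G.Adj (P.getVert i) (P.getVert (i+1)) := P.adj_getVert_succ (by omega)
    have hnb : G.Adj (P.getVert i) (P.getVert (i-1)) := by
      have := P.adj_getVert_succ (i := i - 1) (by omega)
      rw [show i - 1 + 1 = i by omega] at this
      exact this.symm
    have hw1 : w ≠ P.getVert (i-1) := fun h => hwoff (h ▸ getVert_mem_support' P (i-1))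
    have hw2 : w ≠ P.getVert (i+1) := fun h => hwoff (h ▸ getVert_mem_support' P (i+1))
    have hsub : ({P.getVert (i-1), P.getVert (i+1), w} : Finset V) ⊆ G.neighborFinset (P.getVert i) := by
      intro x hx
      simp only [Finset.mem_insert, Finset.mem_singleton] at hx
      rw [SimpleGraph.mem_neighborFinset]
      rcases hx with rfl | rfl | rfl
      · exact hnb
      · exact hna
      · exact hw
    have hcard : ({P.getVert (i-1), P.getVert (i+1), w} : Finset V).card = 3 := by
      rw [Finset.card_insert_of_notMem (by simp [hd1, hw1.symm]),
        Finset.card_insert_of_notMem (by simp [hw2.symm]), Finset.card_singleton]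
    have hdeg3 : G.degree (P.getVert i) = 3 := by
      have hle := hdeg _ (getVert_mem_support' P i)
      have hge : 3 ≤ G.degree (P.getVert i) := by
        rw [← SimpleGraph.card_neighborFinset_eq_degree, ← hcard]
        exact Finset.card_le_card hsub
      omega
    have heq : G.neighborFinset (P.getVert i) = {P.getVert (i-1), P.getVert (i+1), w} :=
      (Finset.eq_of_subset_of_card_le hsub (by
        rw [hcard, SimpleGraph.card_neighborFinset_eq_degree, hdeg3])).symm
    obtain ⟨u, hu, hu1⟩ := hpend _ (getVert_mem_support' P i) hdeg3
    have : u ∈ G.neighborFinset (P.getVert i) := (SimpleGraph.mem_neighborFinset _ _ _).mpr hu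
    rw [heq] at this
    simp only [Finset.mem_insert, Finset.mem_singleton] at this
    -- helper for degree ≥ 2 contradictions
    have two_nbrs : ∀ x y1 y2 : V, G.Adj x y1 → G.Adj x y2 → y1 ≠ y2 → G.degree x = 1 → False := by
      intro x y1 y2 h1 h2 hne12 hdx
      have : ({y1, y2} : Finset V) ⊆ G.neighborFinset x := by
        intro t ht
        simp only [Finset.mem_insert, Finset.mem_singleton] at ht
        rcases ht with rfl | rfl
        · exact (SimpleGraph.mem_neighborFinset _ _ _).mpr h1
        · exact (SimpleGraph.mem_neighborFinset _ _ _).mpr h2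
      have hc := Finset.card_le_card this
      rw [Finset.card_insert_of_notMem (by simp [hne12]), Finset.card_singleton,
        SimpleGraph.card_neighborFinset_eq_degree, hdx] at hc
      omega
    rcases this with rfl | rfl | rfl
    · -- u = getVert (i-1)
      rcases Nat.eq_or_lt_of_le hi1 with h1 | h1
      · -- i = 1 : build a too-long path  z - w - v1 - v2 - ... - vn
        obtain ⟨R, hRp, hRl, hRs⟩ := spine_path P hP (i := i) (j := P.length) (by omega) le_rfl
        have hR2 : (Walk.cons hw.symm R).IsPath := by
          rw [Walk.cons_isPath_iff]
          refine ⟨hRp, fun hmem => ?_⟩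
          obtain ⟨m, _, _, hm⟩ := hRs w hmem
          exact hwoff (hm ▸ getVert_mem_support' P m)
        have hR3 : (Walk.cons hz.symm (Walk.cons hw.symm R)).IsPath := by
          rw [Walk.cons_isPath_iff]
          refine ⟨hR2, fun hmem => ?_⟩
          simp only [Walk.support_cons, List.mem_cons] at hmem
          rcases hmem with h | hmem
          · exact hzw h
          · obtain ⟨m, _, _, hm⟩ := hRs z hmem
            exact hzs (hm ▸ getVert_mem_support' P m)
        have := hlong _ _ _ hR3
        simp only [Walk.length_cons] at this
        omega
      · exact two_nbrs (P.getVert (i-1)) (P.getVert (i-2)) (P.getVert i)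
          (by
            have := P.adj_getVert_succ (i := i - 2) (by omega)
            rw [show i - 2 + 1 = i - 1 by omega] at this
            exact this.symm)
          hnb.symm
          (fun h => by
            have := getVert_injOn' hP (i-2) (by omega) i (by omega) h; omega)
          hu1
    · -- u = getVert (i+1)
      rcases Nat.eq_or_lt_of_le hin with h1 | h1
      · -- i + 1 = n : too-long path v0 ... v(i) - w - z
        obtain ⟨R, hRp, hRl, hRs⟩ := spine_path P hP (i := 0) (j := i) (by omega) (by omega)
        have hR2 : ((R.copy (P.getVert_zero) rfl).concat hw).IsPath := by
          rw [Walk.isPath_def, Walk.support_concat, List.nodup_append]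
          refine ⟨by simpa using hRp.support_nodup, List.nodup_singleton _, ?_⟩
          intro x hx y hx' hxy; subst hxy
          simp only [List.mem_singleton] at hx'
          subst hx'
          rw [Walk.support_copy] at hx
          obtain ⟨m, _, _, hm⟩ := hRs _ hx
          exact hwoff (hm ▸ getVert_mem_support' P m)
        have hR3 : (((R.copy (P.getVert_zero) rfl).concat hw).concat hz).IsPath := by
          rw [Walk.isPath_def, Walk.support_concat, List.nodup_append]
          refine ⟨hR2.support_nodup, List.nodup_singleton _, ?_⟩
          intro x hx y hx' hxy; subst hxy
          simp only [List.mem_singleton] at hx'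
          rw [Walk.support_concat, List.mem_append] at hx
          rcases hx with hx | hx
          · rw [Walk.support_copy] at hx
            obtain ⟨m, _, _, hm⟩ := hRs _ hx
            exact hzs (by rw [← hx', hm]; exact getVert_mem_support' P m)
          · simp only [List.mem_singleton] at hx
            exact hzw (by rw [← hx', hx])
        have := hlong _ _ _ hR3
        simp only [Walk.length_concat, Walk.length_copy] at this
        omega
      · exact two_nbrs (P.getVert (i+1)) (P.getVert (i+2)) (P.getVert i)
          (by
            have := P.adj_getVert_succ (i := i + 1) (by omega)
            exact this)
          hna.symm
          (fun h => by
            have := getVert_injOn' hP (i+2) (by omega) i (by omega) h; omega)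
          hu1
    · -- u = w : w is the pendant, but it has two neighbours
      exact two_nbrs u (P.getVert i) z hw.symm hz
        (fun h => hne h.symm) hu1

section S
variable (hT : G.IsTree) (P : G.Walk a b) (hP : P.IsPath)
  (hlong : ∀ (c d : V) (Q : G.Walk c d), Q.IsPath → Q.length ≤ P.length)
  [Fintype V] [DecidableRel G.Adj]
  (hdeg : ∀ u ∈ P.support, G.degree u ≤ 3)
  (hpend : ∀ u ∈ P.support, G.degree u = 3 → ∃ w, G.Adj u w ∧ G.degree w = 1)

include hT hP hlong hdeg hpend

lemma off_classify :
    ∀ x, x ∉ P.support → ∃ i, 1 ≤ i ∧ i + 1 ≤ P.length ∧ G.Adj (P.getVert i) x := by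
  suffices H : ∀ (x y : V) (W : G.Walk x y), x ∉ P.support → y ∈ P.support →
      ∃ i, 1 ≤ i ∧ i + 1 ≤ P.length ∧ G.Adj (P.getVert i) x by
    intro x hx
    exact H x a ((SimpleGraph.IsTree.isConnected hT).preconnected x a).some hx
      P.start_mem_support
  intro x y W
  induction W with
  | nil => intro hx hy; exact absurd hy hx
  | @cons x y _ h W' ih =>
    intro hx hyend
    by_cases hy : y ∈ P.support
    · obtain ⟨j, hgv, hjle⟩ := Walk.mem_support_iff_exists_getVert.mp hy
      rcases Nat.eq_zero_or_pos j with hj0 | hj0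
      · exfalso
        have hgv0 : P.getVert 0 = y := by rw [← hj0]; exact hgv
        have ha : G.Adj a x := by
          rw [← P.getVert_zero, hgv0]; exact h.symm
        exact hx ((end_nbr0 hT P hP hlong x ha) ▸ getVert_mem_support' P 1)
      rcases Nat.lt_or_ge j P.length with hjn | hjn
      · exact ⟨j, hj0, by omega, hgv ▸ h.symm⟩
      · exfalso
        have hj : j = P.length := by omega
        have hgvn : P.getVert P.length = y := by rw [← hj]; exact hgv
        have hb : G.Adj b x := by
          rw [← P.getVert_length, hgvn]; exact h.symm
        exact hx ((end_nbrn hT P hP hlong x hb) ▸ getVert_mem_support' P (P.length - 1))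
    · obtain ⟨i, hi1, hi2, hadj⟩ := ih hy hyend
      exfalso
      have := off_nbr hT P hP hlong hdeg hpend i hi1 hi2 y hadj hy x h.symm
      exact hx (this ▸ getVert_mem_support' P i)

lemma edge_classify :
    ∀ e ∈ G.edgeSet,
      (∃ i, i + 1 ≤ P.length ∧ e = s(P.getVert i, P.getVert (i+1))) ∨
      (∃ i w, 1 ≤ i ∧ i + 1 ≤ P.length ∧ w ∉ P.support ∧ G.Adj (P.getVert i) w ∧
        (∀ z, G.Adj w z → z = P.getVert i) ∧ e = s(P.getVert i, w)) := by
  intro e he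
  induction e with
  | h x y =>
    rw [SimpleGraph.mem_edgeSet] at he
    by_cases hx : x ∈ P.support <;> by_cases hy : y ∈ P.support
    · obtain ⟨i, hgi, hile⟩ := Walk.mem_support_iff_exists_getVert.mp hx
      obtain ⟨j, hgj, hjle⟩ := Walk.mem_support_iff_exists_getVert.mp hy
      subst hgi; subst hgj
      rcases Nat.lt_trichotomy i j with hij | hij | hij
      · have := adj_spine hT P hP hij hjle he
        exact Or.inl ⟨i, by omega, by rw [this]⟩
      · exact ((hij ▸ he).ne rfl).elim
      · have := adj_spine hT P hP hij hile he.symm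
        exact Or.inl ⟨j, by omega, by rw [this, Sym2.eq_swap]⟩
    · -- x on spine, y off
      obtain ⟨i, hgi, hile⟩ := Walk.mem_support_iff_exists_getVert.mp hx
      subst hgi
      have hi1 : 1 ≤ i := by
        rcases Nat.eq_zero_or_pos i with h0 | h0
        · exfalso
          have := end_nbr0 hT P hP hlong y (by rw [← P.getVert_zero, ← h0]; exact he)
          exact hy (this ▸ getVert_mem_support' P 1)
        · exact h0
      have hi2 : i + 1 ≤ P.length := by
        rcases Nat.lt_or_ge i P.length with h0 | h0
        · omega
        · exfalso
          have hieq : i = P.length := by omega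
          have := end_nbrn hT P hP hlong y
            (by rw [← P.getVert_length, ← hieq]; exact he)
          exact hy (this ▸ getVert_mem_support' P (P.length - 1))
      exact Or.inr ⟨i, y, hi1, hi2, hy, he, off_nbr hT P hP hlong hdeg hpend i hi1 hi2 y he hy, rfl⟩
    · -- y on spine, x off
      obtain ⟨i, hgi, hile⟩ := Walk.mem_support_iff_exists_getVert.mp hy
      subst hgi
      have hi1 : 1 ≤ i := by
        rcases Nat.eq_zero_or_pos i with h0 | h0
        · exfalso
          have := end_nbr0 hT P hP hlong x (by rw [← P.getVert_zero, ← h0]; exact he.symm)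
          exact hx (this ▸ getVert_mem_support' P 1)
        · exact h0
      have hi2 : i + 1 ≤ P.length := by
        rcases Nat.lt_or_ge i P.length with h0 | h0
        · omega
        · exfalso
          have hieq : i = P.length := by omega
          have := end_nbrn hT P hP hlong x
            (by rw [← P.getVert_length, ← hieq]; exact he.symm)
          exact hx (this ▸ getVert_mem_support' P (P.length - 1))
      exact Or.inr ⟨i, x, hi1, hi2, hx, he.symm,
        off_nbr hT P hP hlong hdeg hpend i hi1 hi2 x he.symm hx, Sym2.eq_swap⟩
    · -- both off
      exfalso
      obtain ⟨i, hi1, hi2, hadj⟩ := off_classify hT P hP hlong hdeg hpend x hx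
      have := off_nbr hT P hP hlong hdeg hpend i hi1 hi2 x hadj hx y he
      exact hy (this ▸ getVert_mem_support' P i)

omit hlong hpend in
lemma deg_internal {i : ℕ} (hi1 : 1 ≤ i) (hi2 : i + 1 ≤ P.length) :
    (G.degree (P.getVert i) = 3 ↔ ∃ w, G.Adj (P.getVert i) w ∧ w ∉ P.support) ∧
      (G.degree (P.getVert i) = 2 ∨ G.degree (P.getVert i) = 3) := by
  classical
  have hd1 : P.getVert (i-1) ≠ P.getVert (i+1) := fun h => by
    have := getVert_injOn' hP (i-1) (by omega) (i+1) (by omega) h; omega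
  have hna : G.Adj (P.getVert i) (P.getVert (i+1)) := P.adj_getVert_succ (by omega)
  have hnb : G.Adj (P.getVert i) (P.getVert (i-1)) := by
    have := P.adj_getVert_succ (i := i - 1) (by omega)
    rw [show i - 1 + 1 = i by omega] at this
    exact this.symm
  have hsub : ({P.getVert (i-1), P.getVert (i+1)} : Finset V) ⊆ G.neighborFinset (P.getVert i) := by
    intro t ht
    simp only [Finset.mem_insert, Finset.mem_singleton] at ht
    rw [SimpleGraph.mem_neighborFinset]
    rcases ht with rfl | rfl
    · exact hnb
    · exact hna
  have hcard2 : ({P.getVert (i-1), P.getVert (i+1)} : Finset V).card = 2 := by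
    rw [Finset.card_insert_of_notMem (by simp [hd1]), Finset.card_singleton]
  have hge2 : 2 ≤ G.degree (P.getVert i) := by
    rw [← SimpleGraph.card_neighborFinset_eq_degree, ← hcard2]
    exact Finset.card_le_card hsub
  have hle3 := hdeg _ (getVert_mem_support' P i)
  constructor
  · constructor
    · intro h3
      have hne : ({P.getVert (i-1), P.getVert (i+1)} : Finset V) ≠ G.neighborFinset (P.getVert i) := by
        intro h
        rw [← SimpleGraph.card_neighborFinset_eq_degree, ← h, hcard2] at h3
        omega
      obtain ⟨w, hw1, hw2⟩ := Finset.exists_of_ssubset (hsub.ssubset_of_ne hne)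
      rw [SimpleGraph.mem_neighborFinset] at hw1
      refine ⟨w, hw1, fun hws => ?_⟩
      obtain ⟨j, hgj, hjle⟩ := Walk.mem_support_iff_exists_getVert.mp hws
      subst hgj
      have hij : i ≠ j := fun h => (G.irrefl (h ▸ hw1)).elim
      rcases Nat.lt_or_ge i j with hlt | hge
      · have := adj_spine hT P hP hlt hjle hw1
        exact hw2 (by simp [this])
      · have hlt : j < i := by omega
        have := adj_spine hT P hP hlt (by omega) hw1.symm
        apply hw2
        simp only [Finset.mem_insert, Finset.mem_singleton]
        left; congr 1; omega
    · rintro ⟨w, hw, hwoff⟩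
      have hw1 : w ≠ P.getVert (i-1) := fun h => hwoff (h ▸ getVert_mem_support' P (i-1))
      have hw2 : w ≠ P.getVert (i+1) := fun h => hwoff (h ▸ getVert_mem_support' P (i+1))
      have hsub3 : ({P.getVert (i-1), P.getVert (i+1), w} : Finset V) ⊆ G.neighborFinset (P.getVert i) := by
        intro t ht
        simp only [Finset.mem_insert, Finset.mem_singleton] at ht
        rw [SimpleGraph.mem_neighborFinset]
        rcases ht with rfl | rfl | rfl
        · exact hnb
        · exact hna
        · exact hw
      have hcard3 : ({P.getVert (i-1), P.getVert (i+1), w} : Finset V).card = 3 := by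
        rw [Finset.card_insert_of_notMem (by simp [hd1, hw1.symm]),
          Finset.card_insert_of_notMem (by simp [hw2.symm]), Finset.card_singleton]
      have := Finset.card_le_card hsub3
      rw [hcard3, SimpleGraph.card_neighborFinset_eq_degree] at this
      omega
  · omega

end S

/-- The `i`-th spine edge. -/
def SpE (P : G.Walk a b) (i : ℕ) : Sym2 V := s(P.getVert i, P.getVert (i+1))

/-- `e` is an edge with zone `[lo, hi]` in the caterpillar structure. -/
def coordOK (G : SimpleGraph V) (P : G.Walk a b) (e : Sym2 V) (lo hi : ℕ) : Prop :=
  (hi = lo + 1 ∧ lo + 1 ≤ P.length ∧ e = SpE P lo) ∨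
  (hi = lo ∧ 1 ≤ lo ∧ lo + 1 ≤ P.length ∧ ∃ w, w ∉ P.support ∧ G.Adj (P.getVert lo) w ∧
    (∀ z, G.Adj w z → z = P.getVert lo) ∧ e = s(P.getVert lo, w))

lemma coord_exists (hT : G.IsTree) (P : G.Walk a b) (hP : P.IsPath)
    (hlong : ∀ (c d : V) (Q : G.Walk c d), Q.IsPath → Q.length ≤ P.length)
    [Fintype V] [DecidableRel G.Adj]
    (hdeg : ∀ u ∈ P.support, G.degree u ≤ 3)
    (hpend : ∀ u ∈ P.support, G.degree u = 3 → ∃ w, G.Adj u w ∧ G.degree w = 1) :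
    ∀ e ∈ G.edgeSet, ∃ lo hi, coordOK G P e lo hi := by
  intro e he
  rcases edge_classify hT P hP hlong hdeg hpend e he with ⟨i, h1, h2⟩ | ⟨i, w, h1, h2, h3, h4, h5, h6⟩
  · exact ⟨i, i + 1, Or.inl ⟨rfl, h1, h2⟩⟩
  · exact ⟨i, i, Or.inr ⟨rfl, h1, h2, w, h3, h4, h5, h6⟩⟩

lemma conflict_of_close (P : G.Walk a b) {e f : Sym2 V} {le he lf hf : ℕ}
    (ce : coordOK G P e le he) (cf : coordOK G P f lf hf)
    (h1 : lf ≤ he + 1) (h2 : le ≤ hf + 1) :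
    ∃ u ∈ e, ∃ z ∈ f, u = z ∨ G.Adj u z := by
  have adj : ∀ i, i + 1 ≤ P.length → G.Adj (P.getVert i) (P.getVert (i+1)) :=
    fun i hi => P.adj_getVert_succ (by omega)
  rcases ce with ⟨he1, hle, rfl⟩ | ⟨he1, hle1, hle2, w, hw1, hw2, hw3, rfl⟩ <;>
    rcases cf with ⟨hf1, hlf, rfl⟩ | ⟨hf1, hlf1, hlf2, w', hw1', hw2', hw3', rfl⟩
  · -- spine / spine
    rcases (show lf = le ∨ lf = le + 1 ∨ lf = le + 2 ∨ le = lf + 1 ∨ le = lf + 2 by omega) with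
      h | h | h | h | h
    · exact ⟨P.getVert le, by simp [SpE], P.getVert lf, by simp [SpE], Or.inl (by rw [h])⟩
    · exact ⟨P.getVert (le+1), by simp [SpE], P.getVert lf, by simp [SpE], Or.inl (by rw [h])⟩
    · exact ⟨P.getVert (le+1), by simp [SpE], P.getVert lf, by simp [SpE],
        Or.inr (by rw [h]; exact adj (le+1) (by omega))⟩
    · exact ⟨P.getVert le, by simp [SpE], P.getVert (lf+1), by simp [SpE], Or.inl (by rw [h])⟩
    · exact ⟨P.getVert le, by simp [SpE], P.getVert (lf+1), by simp [SpE],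
        Or.inr (by rw [h]; exact (adj (lf+1) (by omega)).symm)⟩
  · -- spine / pendant
    rcases (show lf = le ∨ lf = le + 1 ∨ lf = le + 2 ∨ le = lf + 1 by omega) with h | h | h | h
    · exact ⟨P.getVert le, by simp [SpE], P.getVert lf, by simp, Or.inl (by rw [h])⟩
    · exact ⟨P.getVert (le+1), by simp [SpE], P.getVert lf, by simp, Or.inl (by rw [h])⟩
    · exact ⟨P.getVert (le+1), by simp [SpE], P.getVert lf, by simp,
        Or.inr (by rw [h]; exact adj (le+1) (by omega))⟩
    · exact ⟨P.getVert le, by simp [SpE], P.getVert lf, by simp,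
        Or.inr (by rw [h]; exact (adj lf (by omega)).symm)⟩
  · -- pendant / spine
    rcases (show le = lf ∨ le = lf + 1 ∨ le = lf + 2 ∨ lf = le + 1 by omega) with h | h | h | h
    · exact ⟨P.getVert le, by simp, P.getVert lf, by simp [SpE], Or.inl (by rw [h])⟩
    · exact ⟨P.getVert le, by simp, P.getVert (lf+1), by simp [SpE], Or.inl (by rw [h])⟩
    · exact ⟨P.getVert le, by simp, P.getVert (lf+1), by simp [SpE],
        Or.inr (by rw [h]; exact (adj (lf+1) (by omega)).symm)⟩
    · exact ⟨P.getVert le, by simp, P.getVert lf, by simp [SpE],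
        Or.inr (by rw [h]; exact adj le (by omega))⟩
  · -- pendant / pendant
    rcases (show lf = le ∨ lf = le + 1 ∨ le = lf + 1 by omega) with h | h | h
    · exact ⟨P.getVert le, by simp, P.getVert lf, by simp, Or.inl (by rw [h])⟩
    · exact ⟨P.getVert le, by simp, P.getVert lf, by simp,
        Or.inr (by rw [h]; exact adj le (by omega))⟩
    · exact ⟨P.getVert le, by simp, P.getVert lf, by simp,
        Or.inr (by rw [h]; exact (adj lf (by omega)).symm)⟩

lemma noconflict_of_far (hT : G.IsTree) (P : G.Walk a b) (hP : P.IsPath)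
    {e f : Sym2 V} {le he lf hf : ℕ}
    (ce : coordOK G P e le he) (cf : coordOK G P f lf hf)
    (h : he + 2 ≤ lf ∨ hf + 2 ≤ le) :
    ∀ u ∈ e, ∀ z ∈ f, u ≠ z ∧ ¬ G.Adj u z := by
  have hsp : ∀ m m', m ≤ P.length → m' ≤ P.length → (m + 2 ≤ m' ∨ m' + 2 ≤ m) →
      P.getVert m ≠ P.getVert m' ∧ ¬ G.Adj (P.getVert m) (P.getVert m') := by
    intro m m' hm hm' hfar
    constructor
    · intro hEq; have := getVert_injOn' hP m hm m' hm' hEq; omega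
    · intro hadj
      rcases Nat.lt_trichotomy m m' with hlt | hlt | hlt
      · have := adj_spine hT P hP hlt hm' hadj; omega
      · omega
      · have := adj_spine hT P hP hlt hm hadj.symm; omega
  have hwv : ∀ (w : V) (lw : ℕ), w ∉ P.support → (∀ z, G.Adj w z → z = P.getVert lw) →
      lw ≤ P.length → ∀ m, m ≤ P.length → m ≠ lw →
      (P.getVert m ≠ w ∧ ¬ G.Adj (P.getVert m) w) := by
    intro w lw hoff hchar hlw m hm hne
    constructor
    · intro hEq; exact hoff (hEq ▸ getVert_mem_support' P m)
    · intro hadj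
      have := hchar _ hadj.symm
      exact hne (getVert_injOn' hP m hm lw hlw this)
  intro u hu z hz
  have flip : ∀ {x y : V}, (x ≠ y ∧ ¬ G.Adj x y) → (y ≠ x ∧ ¬ G.Adj y x) :=
    fun h => ⟨fun hq => h.1 hq.symm, fun hq => h.2 hq.symm⟩
  rcases ce with ⟨he1, hle, rfl⟩ | ⟨he1, hle1, hle2, w, hw1, hw2, hw3, rfl⟩ <;>
    rcases cf with ⟨hf1, hlf, rfl⟩ | ⟨hf1, hlf1, hlf2, w', hw1', hw2', hw3', rfl⟩
  · -- spine / spine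
    rw [SpE, Sym2.mem_iff] at hu hz
    rcases hu with hu | hu <;> rcases hz with hz | hz <;> rw [hu, hz] <;>
      exact hsp _ _ (by omega) (by omega) (by omega)
  · -- spine / pendant
    rw [SpE, Sym2.mem_iff] at hu
    rw [Sym2.mem_iff] at hz
    rcases hu with hu | hu <;> rcases hz with hz | hz <;> rw [hu, hz]
    · exact hsp _ _ (by omega) (by omega) (by omega)
    · exact hwv w' lf hw1' hw3' (by omega) le (by omega) (by omega)
    · exact hsp _ _ (by omega) (by omega) (by omega)
    · exact hwv w' lf hw1' hw3' (by omega) (le+1) (by omega) (by omega)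
  · -- pendant / spine
    rw [Sym2.mem_iff] at hu
    rw [SpE, Sym2.mem_iff] at hz
    rcases hu with hu | hu <;> rcases hz with hz | hz <;> rw [hu, hz]
    · exact hsp _ _ (by omega) (by omega) (by omega)
    · exact hsp _ _ (by omega) (by omega) (by omega)
    · exact flip (hwv w le hw1 hw3 (by omega) lf (by omega) (by omega))
    · exact flip (hwv w le hw1 hw3 (by omega) (lf+1) (by omega) (by omega))
  · -- pendant / pendant
    rw [Sym2.mem_iff] at hu hz
    rcases hu with hu | hu <;> rcases hz with hz | hz <;> rw [hu, hz]
    · exact hsp _ _ (by omega) (by omega) (by omega)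
    · exact hwv w' lf hw1' hw3' (by omega) le (by omega) (by omega)
    · exact flip (hwv w le hw1 hw3 (by omega) lf (by omega) (by omega))
    · constructor
      · intro hEq
        have hadj' : G.Adj (P.getVert le) w' := hEq ▸ hw2
        have := hw3' _ hadj'.symm
        have := getVert_injOn' hP le (by omega) lf (by omega) this
        omega
      · intro hadj
        have := hw3 _ hadj
        exact hw1' (this ▸ getVert_mem_support' P le)

lemma coordOK_SpE (P : G.Walk a b) {i : ℕ} (hi : i + 1 ≤ P.length) :
    coordOK G P (SpE P i) i (i+1) := Or.inl ⟨rfl, hi, rfl⟩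

lemma SpE_injOn (P : G.Walk a b) (hP : P.IsPath) {i j : ℕ}
    (hi : i + 1 ≤ P.length) (hj : j + 1 ≤ P.length) (h : SpE P i = SpE P j) : i = j := by
  rw [SpE, SpE, Sym2.eq_iff] at h
  rcases h with ⟨h1, _⟩ | ⟨h1, h2⟩
  · exact getVert_injOn' hP i (by omega) j (by omega) h1
  · have e1 := getVert_injOn' hP i (by omega) (j+1) (by omega) h1
    have e2 := getVert_injOn' hP (i+1) (by omega) j (by omega) h2
    omega

lemma spine_matching (hT : G.IsTree) (P : G.Walk a b) (hP : P.IsPath)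
    (J : Finset ℕ) (hb : ∀ j ∈ J, j + 1 ≤ P.length)
    (hgap : ∀ i ∈ J, ∀ j ∈ J, i < j → i + 3 ≤ j) :
    IsInducedMatching G (SpE P '' ↑J) ∧ (SpE P '' ↑J).ncard = J.card := by
  constructor
  · constructor
    · rintro e ⟨i, hi, rfl⟩
      exact P.adj_getVert_succ (by have := hb i hi; omega)
    · rintro e ⟨i, hi, rfl⟩ f ⟨j, hj, rfl⟩ hne
      have hij : i ≠ j := fun h => hne (by rw [h])
      have hfar : (i + 1) + 2 ≤ j ∨ (j + 1) + 2 ≤ i := by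
        rcases Nat.lt_or_ge i j with h | h
        · exact Or.inl (by have := hgap i hi j hj h; omega)
        · exact Or.inr (by have := hgap j hj i hi (by omega); omega)
      exact noconflict_of_far hT P hP (coordOK_SpE P (hb i hi)) (coordOK_SpE P (hb j hj)) hfar
  · rw [Set.ncard_image_of_injOn, Set.ncard_coe_finset]
    intro i hi j hj h
    exact SpE_injOn P hP (hb i hi) (hb j hj) h

lemma spine_blocker (hT : G.IsTree) (P : G.Walk a b) (hP : P.IsPath)
    (hlong : ∀ (c d : V) (Q : G.Walk c d), Q.IsPath → Q.length ≤ P.length)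
    [Fintype V] [DecidableRel G.Adj]
    (hdeg : ∀ u ∈ P.support, G.degree u ≤ 3)
    (hpend : ∀ u ∈ P.support, G.degree u = 3 → ∃ w, G.Adj u w ∧ G.degree w = 1)
    (I : Finset ℕ) (hb : ∀ i ∈ I, i + 1 ≤ P.length)
    (hgap : ∀ i ∈ I, ∀ j ∈ I, i < j → i + 3 ≤ j)
    (hcov : ∀ lo hi : ℕ, ((hi = lo + 1 ∧ lo + 1 ≤ P.length) ∨
        (hi = lo ∧ 1 ≤ lo ∧ lo + 1 ≤ P.length)) →
      ∃ i ∈ I, i ≤ hi + 1 ∧ lo ≤ i + 2) :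
    IsMaximalInducedMatching G (SpE P '' ↑I) ∧ (SpE P '' ↑I).ncard = I.card := by
  obtain ⟨hind, hcard⟩ := spine_matching hT P hP I hb hgap
  refine ⟨⟨hind, ?_⟩, hcard⟩
  intro N hN hsub
  apply Set.Subset.antisymm _ hsub
  intro e he
  obtain ⟨lo, hi, hc⟩ := coord_exists hT P hP hlong hdeg hpend e (hN.1 he)
  have hzone : (hi = lo + 1 ∧ lo + 1 ≤ P.length) ∨ (hi = lo ∧ 1 ≤ lo ∧ lo + 1 ≤ P.length) := by
    rcases hc with ⟨h1, h2, _⟩ | ⟨h1, h2, h3, _⟩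
    · exact Or.inl ⟨h1, h2⟩
    · exact Or.inr ⟨h1, h2, h3⟩
  obtain ⟨i, hiI, hclose1, hclose2⟩ := hcov lo hi hzone
  have hSpmem : SpE P i ∈ N := hsub ⟨i, hiI, rfl⟩
  by_cases heq : e = SpE P i
  · exact heq ▸ ⟨i, hiI, rfl⟩
  · exfalso
    obtain ⟨u, hu, z, hz, hcon⟩ :=
      conflict_of_close P hc (coordOK_SpE P (hb i hiI)) hclose1 hclose2
    obtain ⟨hne, hnadj⟩ := hN.2 e he (SpE P i) hSpmem heq u hu z hz
    rcases hcon with h | h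
    · exact hne h
    · exact hnadj h

lemma exists_max_ext [Fintype V] (B : Set (Sym2 V)) (hB : IsInducedMatching G B) :
    ∃ N, IsMaximalInducedMatching G N ∧ B ⊆ N := by
  classical
  have hfin : {N : Set (Sym2 V) | IsInducedMatching G N ∧ B ⊆ N}.Finite := Set.toFinite _
  obtain ⟨N, hN, hmax⟩ := Set.Finite.exists_maximalFor (fun N => N.ncard) _ hfin
    ⟨B, hB, subset_rfl⟩
  refine ⟨N, ⟨hN.1, fun N' hN' hsub => ?_⟩, hN.2⟩
  have h1 : N.ncard ≤ N'.ncard := Set.ncard_le_ncard hsub (Set.toFinite _)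
  have h2 := hmax (j := N') ⟨hN', hN.2.trans hsub⟩ h1
  exact (Set.eq_of_subset_of_ncard_le hsub h2 (Set.toFinite _)).symm

lemma not_WI [Fintype V] (M B : Set (Sym2 V)) (hM : IsMaximalInducedMatching G M)
    (hB : IsInducedMatching G B) (h : M.ncard < B.ncard) : ¬ WellIndumatched G := by
  intro hWI
  obtain ⟨N, hN, hBN⟩ := exists_max_ext B hB
  have h1 := hWI M N hM hN
  have h2 : B.ncard ≤ N.ncard := Set.ncard_le_ncard hBN (Set.toFinite _)
  omega



/-- two distinct edges of an induced matching have far-apart zones -/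
lemma far_of_im {K : Set (Sym2 V)} (hK : IsInducedMatching G K) (P : G.Walk a b)
    {e f : Sym2 V} {le ue lf uf : ℕ} (he : e ∈ K) (hf : f ∈ K) (hne : e ≠ f)
    (ce : coordOK G P e le ue) (cf : coordOK G P f lf uf) :
    ue + 2 ≤ lf ∨ uf + 2 ≤ le := by
  by_contra hcon
  push_neg at hcon
  obtain ⟨u, hu, z, hz, h⟩ := conflict_of_close P ce cf (by omega) (by omega)
  obtain ⟨h1, h2⟩ := hK.2 e he f hf hne u hu z hz
  rcases h with h | h
  · exact h1 h
  · exact h2 h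

lemma singleton_im {e : Sym2 V} (he : e ∈ G.edgeSet) : IsInducedMatching G {e} := by
  refine ⟨by simpa using he, ?_⟩
  rintro x hx y hy hne
  simp only [Set.mem_singleton_iff] at hx hy
  exact absurd (hx.trans hy.symm) hne

lemma pair_im (hT : G.IsTree) (P : G.Walk a b) (hP : P.IsPath)
    {e f : Sym2 V} {le ue lf uf : ℕ}
    (he : e ∈ G.edgeSet) (hf : f ∈ G.edgeSet)
    (ce : coordOK G P e le ue) (cf : coordOK G P f lf uf)
    (h : ue + 2 ≤ lf ∨ uf + 2 ≤ le) : IsInducedMatching G {e, f} := by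
  constructor
  · rintro x (rfl | rfl)
    · exact he
    · exact hf
  · rintro x hx y hy hne
    rcases hx with rfl | hx <;> rcases hy with rfl | hy
    · exact absurd rfl hne
    · rw [Set.mem_singleton_iff] at hy; subst hy
      exact noconflict_of_far hT P hP ce cf h
    · rw [Set.mem_singleton_iff] at hx; subst hx
      exact noconflict_of_far hT P hP cf ce (h.symm.imp id id)
    · rw [Set.mem_singleton_iff] at hx hy
      exact absurd (hx.trans hy.symm) hne

lemma ne_of_far (hT : G.IsTree) (P : G.Walk a b) (hP : P.IsPath)
    {e f : Sym2 V} {le ue lf uf : ℕ}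
    (ce : coordOK G P e le ue) (cf : coordOK G P f lf uf)
    (h : ue + 2 ≤ lf ∨ uf + 2 ≤ le) : e ≠ f := by
  intro hEq
  induction e using Sym2.ind with
  | _ x y =>
    have := noconflict_of_far hT P hP ce cf h x (by simp) x (by rw [← hEq]; simp)
    exact this.1 rfl

section S
variable (hT : G.IsTree) (P : G.Walk a b) (hP : P.IsPath)
  (hlong : ∀ (c d : V) (Q : G.Walk c d), Q.IsPath → Q.length ≤ P.length)
  [Fintype V] [DecidableRel G.Adj]
  (hdeg : ∀ u ∈ P.support, G.degree u ≤ 3)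
  (hpend : ∀ u ∈ P.support, G.degree u = 3 → ∃ w, G.Adj u w ∧ G.degree w = 1)

include hT hP hlong hdeg hpend

lemma max_nonempty {M : Set (Sym2 V)} (hM : IsMaximalInducedMatching G M)
    (hn : 1 ≤ P.length) : M.Nonempty := by
  rw [Set.nonempty_iff_ne_empty]
  intro hemp
  have hadj : SpE P 0 ∈ G.edgeSet := P.adj_getVert_succ (by omega)
  have := hM.2 {SpE P 0} (singleton_im hadj) (by rw [hemp]; exact Set.empty_subset _)
  rw [hemp] at this
  exact absurd (this ▸ rfl : SpE P 0 ∈ (∅ : Set (Sym2 V))) (Set.notMem_empty _)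

lemma WI_n0 (hn : P.length = 0) : WellIndumatched G := by
  have hempty : ∀ K : Set (Sym2 V), IsInducedMatching G K → K = ∅ := by
    intro K hK
    rw [Set.eq_empty_iff_forall_notMem]
    intro e he
    obtain ⟨lo, hi, hc⟩ := coord_exists hT P hP hlong hdeg hpend e (hK.1 he)
    rcases hc with ⟨_, h, _⟩ | ⟨_, _, h, _⟩ <;> omega
  intro M N hM hN
  rw [hempty M hM.1, hempty N hN.1]

lemma WI_small (hn1 : 1 ≤ P.length) (hn3 : P.length ≤ 3) : WellIndumatched G := by
  have key : ∀ K : Set (Sym2 V), IsMaximalInducedMatching G K → K.ncard = 1 := by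
    intro K hK
    obtain ⟨e, he⟩ := max_nonempty hT P hP hlong hdeg hpend hK hn1
    have hall : ∀ f ∈ K, f = e := by
      intro f hf
      by_contra hne
      obtain ⟨le, ue, ce⟩ := coord_exists hT P hP hlong hdeg hpend e (hK.1.1 he)
      obtain ⟨lf, uf, cf⟩ := coord_exists hT P hP hlong hdeg hpend f (hK.1.1 hf)
      have hfar := far_of_im hK.1 P hf he hne cf ce
      rcases ce with ⟨h1, h2, _⟩ | ⟨h1, h2, h3, _⟩ <;>
        rcases cf with ⟨g1, g2, _⟩ | ⟨g1, g2, g3, _⟩ <;> rcases hfar with h | h <;> omega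
    have : K = {e} := Set.eq_singleton_iff_unique_mem.mpr ⟨he, hall⟩
    rw [this, Set.ncard_singleton]
  intro M N hM hN
  rw [key M hM, key N hN]

lemma WI_seven (hn : P.length = 6)
    (hv : ¬ ∃ w, G.Adj (P.getVert 3) w ∧ w ∉ P.support) : WellIndumatched G := by
  have key : ∀ K : Set (Sym2 V), IsMaximalInducedMatching G K → K.ncard = 2 := by
    intro K hK
    -- no pendant at position 3
    have coordfact : ∀ e ∈ K, ∀ lo hi : ℕ, coordOK G P e lo hi →
        (hi = lo + 1 ∧ lo + 1 ≤ 6) ∨ (hi = lo ∧ 1 ≤ lo ∧ lo + 1 ≤ 6 ∧ lo ≠ 3) := by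
      intro e heK lo hi hc
      rcases hc with ⟨h1, h2, _⟩ | ⟨h1, h2, h3, w, hw1, hw2, _, _⟩
      · exact Or.inl ⟨h1, by omega⟩
      · refine Or.inr ⟨h1, h2, by omega, fun h => hv ⟨w, by rw [← h]; exact hw2, hw1⟩⟩
    obtain ⟨e, he⟩ := max_nonempty hT P hP hlong hdeg hpend hK (by omega)
    obtain ⟨le, ue, ce⟩ := coord_exists hT P hP hlong hdeg hpend e (hK.1.1 he)
    -- a second element
    have hf : ∃ f ∈ K, f ≠ e := by
      by_contra hcon
      push_neg at hcon
      have hKe : K = {e} := Set.eq_singleton_iff_unique_mem.mpr ⟨he, hcon⟩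
      rcases (show ue ≤ 3 ∨ 4 ≤ ue by omega) with hcase | hcase
      · -- add SpE P 5
        have c5 : coordOK G P (SpE P 5) 5 6 := coordOK_SpE P (by omega)
        have hfar : ue + 2 ≤ 5 ∨ 6 + 2 ≤ le := Or.inl (by omega)
        have hone := hK.2 {e, SpE P 5}
          (pair_im hT P hP (hK.1.1 he) (P.adj_getVert_succ (by omega)) ce c5 hfar)
          (by rw [hKe]; exact Set.singleton_subset_iff.mpr (Set.mem_insert _ _))
        have : SpE P 5 ∈ K := by rw [← hone]; exact Set.mem_insert_of_mem _ rfl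
        rw [hKe, Set.mem_singleton_iff] at this
        exact (ne_of_far hT P hP c5 ce (hfar.symm.imp id id)) this
      · -- add SpE P 0
        have hle : 3 ≤ le := by
          have := coordfact e he le ue ce; omega
        have c0 : coordOK G P (SpE P 0) 0 1 := coordOK_SpE P (by omega)
        have hfar : ue + 2 ≤ 0 ∨ 1 + 2 ≤ le := Or.inr (by omega)
        have hone := hK.2 {e, SpE P 0}
          (pair_im hT P hP (hK.1.1 he) (P.adj_getVert_succ (by omega)) ce c0 hfar)
          (by rw [hKe]; exact Set.singleton_subset_iff.mpr (Set.mem_insert _ _))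
        have : SpE P 0 ∈ K := by rw [← hone]; exact Set.mem_insert_of_mem _ rfl
        rw [hKe, Set.mem_singleton_iff] at this
        exact (ne_of_far hT P hP c0 ce (hfar.symm.imp id id)) this
    obtain ⟨f, hfK, hfe⟩ := hf
    obtain ⟨lf, uf, cf⟩ := coord_exists hT P hP hlong hdeg hpend f (hK.1.1 hfK)
    -- at most two
    have hall : ∀ g ∈ K, g = e ∨ g = f := by
      intro g hgK
      by_contra hg
      push_neg at hg
      obtain ⟨hge, hgf⟩ := hg
      obtain ⟨lg, ug, cg⟩ := coord_exists hT P hP hlong hdeg hpend g (hK.1.1 hgK)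
      have f1 := far_of_im hK.1 P he hfK hfe.symm ce cf
      have f2 := far_of_im hK.1 P hgK he hge cg ce
      have f3 := far_of_im hK.1 P hgK hfK hgf cg cf
      have z1 := coordfact e he le ue ce
      have z2 := coordfact f hfK lf uf cf
      have z3 := coordfact g hgK lg ug cg
      rcases z1 with ⟨r1, r2⟩ | ⟨r1, r2, r3, r4⟩ <;>
        rcases z2 with ⟨s1, s2⟩ | ⟨s1, s2, s3, s4⟩ <;>
          rcases z3 with ⟨t1, t2⟩ | ⟨t1, t2, t3, t4⟩ <;>
            rcases f1 with f1 | f1 <;> rcases f2 with f2 | f2 <;> rcases f3 with f3 | f3 <;>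
              omega
    have : K = {e, f} := by
      apply Set.Subset.antisymm
      · intro g hg
        rcases hall g hg with rfl | rfl
        · exact Set.mem_insert _ _
        · exact Set.mem_insert_of_mem _ rfl
      · rintro g (rfl | hg)
        · exact he
        · rw [Set.mem_singleton_iff] at hg; exact hg ▸ hfK
    rw [this, Set.ncard_pair (Ne.symm hfe)]
  intro M N hM hN
  rw [key M hM, key N hN]

end S

section S
variable (hT : G.IsTree) (P : G.Walk a b) (hP : P.IsPath)
  (hlong : ∀ (c d : V) (Q : G.Walk c d), Q.IsPath → Q.length ≤ P.length)
  [Fintype V] [DecidableRel G.Adj]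
  (hdeg : ∀ u ∈ P.support, G.degree u ≤ 3)
  (hpend : ∀ u ∈ P.support, G.degree u = 3 → ∃ w, G.Adj u w ∧ G.degree w = 1)

include hT hP hlong hdeg hpend


lemma notWI_45 (hn1 : 4 ≤ P.length) (hn2 : P.length ≤ 5) : ¬ WellIndumatched G := by
  classical
  obtain ⟨hmax, hcardI⟩ := spine_blocker hT P hP hlong hdeg hpend {2}
    (by intro i hi; simp at hi; omega)
    (by intro i hi j hj hij; simp at hi hj; omega)
    (by
      intro lo hi hzone
      refine ⟨2, by simp, ?_⟩
      rcases hzone with ⟨rfl, h⟩ | ⟨rfl, h1, h2⟩ <;> omega)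
  obtain ⟨hind, hcardJ⟩ := spine_matching hT P hP ({0, 3} : Finset ℕ)
    (by intro j hj; simp at hj; rcases hj with rfl | rfl <;> omega)
    (by intro i hi j hj hij; simp at hi hj; rcases hi with rfl | rfl <;>
        rcases hj with rfl | rfl <;> omega)
  apply not_WI _ _ hmax hind
  rw [hcardI, hcardJ]
  simp

lemma notWI_7deg3 (hn : P.length = 6)
    (hv : ∃ w, G.Adj (P.getVert 3) w ∧ w ∉ P.support) : ¬ WellIndumatched G := by
  classical
  obtain ⟨w, hw, hwoff⟩ := hv
  obtain ⟨hmax, hcardI⟩ := spine_blocker hT P hP hlong hdeg hpend {1, 4}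
    (by intro i hi; simp at hi; rcases hi with rfl | rfl <;> omega)
    (by intro i hi j hj hij; simp at hi hj; rcases hi with rfl | rfl <;>
        rcases hj with rfl | rfl <;> omega)
    (by
      intro lo hi hzone
      rcases (show lo ≤ 3 ∨ 4 ≤ lo by omega) with h | h
      · refine ⟨1, by simp, ?_⟩
        rcases hzone with ⟨rfl, h1⟩ | ⟨rfl, h1, h2⟩ <;> omega
      · refine ⟨4, by simp, ?_⟩
        rcases hzone with ⟨rfl, h1⟩ | ⟨rfl, h1, h2⟩ <;> omega)
  -- the packing of size 3 : SpE 0, the pendant at 3, SpE 5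
  have hchar : ∀ z, G.Adj w z → z = P.getVert 3 :=
    off_nbr hT P hP hlong hdeg hpend 3 (by omega) (by omega) w hw hwoff
  have c0 : coordOK G P (SpE P 0) 0 1 := coordOK_SpE P (by omega)
  have c5 : coordOK G P (SpE P 5) 5 6 := coordOK_SpE P (by omega)
  have cp : coordOK G P (s(P.getVert 3, w)) 3 3 :=
    Or.inr ⟨rfl, by omega, by omega, w, hwoff, hw, hchar, rfl⟩
  set B : Set (Sym2 V) := {SpE P 0, s(P.getVert 3, w), SpE P 5} with hB
  have hBind : IsInducedMatching G B := by
    constructor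
    · rintro e (rfl | rfl | rfl)
      · exact P.adj_getVert_succ (by omega)
      · exact hw
      · exact P.adj_getVert_succ (by omega)
    · rintro e he f hf hne
      rcases he with rfl | rfl | rfl <;> rcases hf with rfl | rfl | rfl
      · exact absurd rfl hne
      · exact noconflict_of_far hT P hP c0 cp (Or.inl (by omega))
      · exact noconflict_of_far hT P hP c0 c5 (Or.inl (by omega))
      · exact noconflict_of_far hT P hP cp c0 (Or.inr (by omega))
      · exact absurd rfl hne
      · exact noconflict_of_far hT P hP cp c5 (Or.inl (by omega))
      · exact noconflict_of_far hT P hP c5 c0 (Or.inr (by omega))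
      · exact noconflict_of_far hT P hP c5 cp (Or.inr (by omega))
      · exact absurd rfl hne
  have hne1 : SpE P 0 ≠ s(P.getVert 3, w) := ne_of_far hT P hP c0 cp (Or.inl (by omega))
  have hne2 : SpE P 0 ≠ SpE P 5 := ne_of_far hT P hP c0 c5 (Or.inl (by omega))
  have hne3 : s(P.getVert 3, w) ≠ SpE P 5 := ne_of_far hT P hP cp c5 (Or.inl (by omega))
  have hcardB : B.ncard = 3 := by
    rw [hB, Set.ncard_insert_of_notMem (by simp [hne1, hne2]), Set.ncard_pair hne3]
  apply not_WI _ _ hmax hBind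
  rw [hcardI, hcardB]
  simp

end S

section S
variable (hT : G.IsTree) (P : G.Walk a b) (hP : P.IsPath)
  (hlong : ∀ (c d : V) (Q : G.Walk c d), Q.IsPath → Q.length ≤ P.length)
  [Fintype V] [DecidableRel G.Adj]
  (hdeg : ∀ u ∈ P.support, G.degree u ≤ 3)
  (hpend : ∀ u ∈ P.support, G.degree u = 3 → ∃ w, G.Adj u w ∧ G.degree w = 1)

include hT hP hlong hdeg hpend


lemma notWI_big (hn : 7 ≤ P.length) : ¬ WellIndumatched G := by
  classical
  have hinj1 : Function.Injective (fun j => 3*j + 2) := fun x y h => by simp only [] at h; omega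
  have hinj2 : Function.Injective (fun j => 3*j) := fun x y h => by simp only [] at h; omega
  have hinj3 : Function.Injective (fun j => 3*j + 6) := fun x y h => by simp only [] at h; omega
  rcases (show P.length % 3 = 1 ∨ P.length % 3 = 2 ∨ P.length % 3 = 0 by omega) with
    hm | hm | hm
  · -- n ≡ 1 (mod 3)
    obtain ⟨t, ht, ht2⟩ : ∃ t, 3*t+1 = P.length ∧ 2 ≤ t :=
      ⟨(P.length-1)/3, by omega, by omega⟩
    obtain ⟨hmax, hcardI⟩ := spine_blocker hT P hP hlong hdeg hpend
      ((Finset.range t).image (fun j => 3*j + 2))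
      (by intro i hi; simp only [Finset.mem_image, Finset.mem_range] at hi
          obtain ⟨j, hj, rfl⟩ := hi; omega)
      (by intro i hi j hj hij
          simp only [Finset.mem_image, Finset.mem_range] at hi hj
          obtain ⟨j1, hj1, rfl⟩ := hi; obtain ⟨j2, hj2, rfl⟩ := hj; omega)
      (by intro lo hi hzone
          refine ⟨3 * (min (t-1) ((lo-1)/3)) + 2, ?_, ?_⟩
          · simp only [Finset.mem_image, Finset.mem_range]
            exact ⟨_, by omega, rfl⟩
          · rcases le_total (t-1) ((lo-1)/3) with h | h
            · rw [min_eq_left h]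
              rcases hzone with ⟨rfl, h1⟩ | ⟨rfl, h1, h2⟩ <;> omega
            · rw [min_eq_right h]
              rcases hzone with ⟨rfl, h1⟩ | ⟨rfl, h1, h2⟩ <;> omega)
    obtain ⟨hind, hcardJ⟩ := spine_matching hT P hP
      ((Finset.range (t+1)).image (fun j => 3*j))
      (by intro i hi; simp only [Finset.mem_image, Finset.mem_range] at hi
          obtain ⟨j, hj, rfl⟩ := hi; omega)
      (by intro i hi j hj hij
          simp only [Finset.mem_image, Finset.mem_range] at hi hj
          obtain ⟨j1, hj1, rfl⟩ := hi; obtain ⟨j2, hj2, rfl⟩ := hj; omega)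
    apply not_WI _ _ hmax hind
    rw [hcardI, hcardJ, Finset.card_image_of_injective _ hinj1,
      Finset.card_image_of_injective _ hinj2, Finset.card_range, Finset.card_range]
    omega
  · -- n ≡ 2 (mod 3)
    obtain ⟨t, ht, ht2⟩ : ∃ t, 3*t+2 = P.length ∧ 2 ≤ t :=
      ⟨(P.length-2)/3, by omega, by omega⟩
    obtain ⟨hmax, hcardI⟩ := spine_blocker hT P hP hlong hdeg hpend
      ((Finset.range t).image (fun j => 3*j + 2))
      (by intro i hi; simp only [Finset.mem_image, Finset.mem_range] at hi
          obtain ⟨j, hj, rfl⟩ := hi; omega)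
      (by intro i hi j hj hij
          simp only [Finset.mem_image, Finset.mem_range] at hi hj
          obtain ⟨j1, hj1, rfl⟩ := hi; obtain ⟨j2, hj2, rfl⟩ := hj; omega)
      (by intro lo hi hzone
          refine ⟨3 * (min (t-1) ((lo-1)/3)) + 2, ?_, ?_⟩
          · simp only [Finset.mem_image, Finset.mem_range]
            exact ⟨_, by omega, rfl⟩
          · rcases le_total (t-1) ((lo-1)/3) with h | h
            · rw [min_eq_left h]
              rcases hzone with ⟨rfl, h1⟩ | ⟨rfl, h1, h2⟩ <;> omega
            · rw [min_eq_right h]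
              rcases hzone with ⟨rfl, h1⟩ | ⟨rfl, h1, h2⟩ <;> omega)
    obtain ⟨hind, hcardJ⟩ := spine_matching hT P hP
      ((Finset.range (t+1)).image (fun j => 3*j))
      (by intro i hi; simp only [Finset.mem_image, Finset.mem_range] at hi
          obtain ⟨j, hj, rfl⟩ := hi; omega)
      (by intro i hi j hj hij
          simp only [Finset.mem_image, Finset.mem_range] at hi hj
          obtain ⟨j1, hj1, rfl⟩ := hi; obtain ⟨j2, hj2, rfl⟩ := hj; omega)
    apply not_WI _ _ hmax hind
    rw [hcardI, hcardJ, Finset.card_image_of_injective _ hinj1,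
      Finset.card_image_of_injective _ hinj2, Finset.card_range, Finset.card_range]
    omega
  · -- n ≡ 0 (mod 3)
    obtain ⟨m, hm3, hm2⟩ : ∃ m, 3*m+3 = P.length ∧ 2 ≤ m :=
      ⟨(P.length-3)/3, by omega, by omega⟩
    obtain ⟨hmax, hcardI⟩ := spine_blocker hT P hP hlong hdeg hpend
      (insert 2 ((Finset.range (m-1)).image (fun j => 3*j + 6)))
      (by intro i hi
          simp only [Finset.mem_insert, Finset.mem_image, Finset.mem_range] at hi
          rcases hi with rfl | ⟨j, hj, rfl⟩ <;> omega)
      (by intro i hi j hj hij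
          simp only [Finset.mem_insert, Finset.mem_image, Finset.mem_range] at hi hj
          rcases hi with rfl | ⟨j1, hj1, rfl⟩ <;> rcases hj with rfl | ⟨j2, hj2, rfl⟩ <;> omega)
      (by intro lo hi hzone
          rcases (show lo ≤ 4 ∨ 5 ≤ lo by omega) with h | h
          · refine ⟨2, by simp, ?_⟩
            rcases hzone with ⟨rfl, h1⟩ | ⟨rfl, h1, h2⟩ <;> omega
          · refine ⟨3 * ((lo-6)/3) + 6, ?_, ?_⟩
            · simp only [Finset.mem_insert, Finset.mem_image, Finset.mem_range]
              refine Or.inr ⟨(lo-6)/3, ?_, rfl⟩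
              rcases hzone with ⟨rfl, h1⟩ | ⟨rfl, h1, h2⟩ <;> omega
            · rcases hzone with ⟨rfl, h1⟩ | ⟨rfl, h1, h2⟩ <;> omega)
    obtain ⟨hind, hcardJ⟩ := spine_matching hT P hP
      ((Finset.range (m+1)).image (fun j => 3*j))
      (by intro i hi; simp only [Finset.mem_image, Finset.mem_range] at hi
          obtain ⟨j, hj, rfl⟩ := hi; omega)
      (by intro i hi j hj hij
          simp only [Finset.mem_image, Finset.mem_range] at hi hj
          obtain ⟨j1, hj1, rfl⟩ := hi; obtain ⟨j2, hj2, rfl⟩ := hj; omega)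
    apply not_WI _ _ hmax hind
    rw [hcardI, hcardJ, Finset.card_insert_of_notMem (by
        simp only [Finset.mem_image, Finset.mem_range]
        rintro ⟨j, hj, hEq⟩
        omega),
      Finset.card_image_of_injective _ hinj3,
      Finset.card_image_of_injective _ hinj2, Finset.card_range, Finset.card_range]
    omega

end S

end WIaux

/-- Let `T` be a finite tree with a longest path `P = v₁ ⋯ v_k` (so `k = P.length + 1`
vertices) such that every vertex of `P` has degree at most `3` and every vertex of `P` of
degree `3` is incident to a pendant edge. Then `T` is well-indumatched iff
`k ∈ {1,2,3,4}`, or `k = 7` and `v₄` has degree `2`. -/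
theorem stmt_2 {V : Type*} [Fintype V] (G : SimpleGraph V) [DecidableRel G.Adj]
    (hT : G.IsTree) {a b : V} (P : G.Walk a b) (hP : P.IsPath)
    (hlong : ∀ (c d : V) (Q : G.Walk c d), Q.IsPath → Q.length ≤ P.length)
    (hdeg : ∀ u ∈ P.support, G.degree u ≤ 3)
    (hpend : ∀ u ∈ P.support, G.degree u = 3 → ∃ w, G.Adj u w ∧ G.degree w = 1) :
    WellIndumatched G ↔
      (P.length + 1 ∈ ({1, 2, 3, 4} : Set ℕ) ∨
        (P.length + 1 = 7 ∧ G.degree (P.getVert 3) = 2)) := by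
  rcases Nat.lt_or_ge P.length 4 with h4 | h4
  · apply iff_of_true
    · rcases Nat.eq_zero_or_pos P.length with h0 | h0
      · exact WIaux.WI_n0 hT P hP hlong hdeg hpend h0
      · exact WIaux.WI_small hT P hP hlong hdeg hpend h0 (by omega)
    · left; simp only [Set.mem_insert_iff, Set.mem_singleton_iff]; omega
  · rcases Nat.lt_or_ge P.length 6 with h6 | h6
    · apply iff_of_false
      · exact WIaux.notWI_45 hT P hP hlong hdeg hpend h4 (by omega)
      · rintro (hmem | ⟨h7, _⟩)
        · simp only [Set.mem_insert_iff, Set.mem_singleton_iff] at hmem; omega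
        · omega
    · rcases Nat.lt_or_ge P.length 7 with h7 | h7
      · have hn : P.length = 6 := by omega
        have hdi := WIaux.deg_internal hT P hP hdeg (i := 3) (by omega) (by omega)
        rcases hdi.2 with h2 | h3
        · apply iff_of_true
          · refine WIaux.WI_seven hT P hP hlong hdeg hpend hn ?_
            intro hex
            have := hdi.1.mpr (by
              obtain ⟨w, hw1, hw2⟩ := hex
              exact ⟨w, hw1, hw2⟩)
            omega
          · right; exact ⟨by omega, h2⟩
        · apply iff_of_false
          · exact WIaux.notWI_7deg3 hT P hP hlong hdeg hpend hn (hdi.1.mp h3)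
          · rintro (hmem | ⟨_, hdeg2⟩)
            · simp only [Set.mem_insert_iff, Set.mem_singleton_iff] at hmem; omega
            · omega
      · apply iff_of_false
        · exact WIaux.notWI_big hT P hP hlong hdeg hpend h7
        · rintro (hmem | ⟨h7', _⟩)
          · simp only [Set.mem_insert_iff, Set.mem_singleton_iff] at hmem; omega
          · omega
end

section
/- For every positive integer n, the path P_n on n vertices is well-indumatched if and only if n ∈ {1, 2, 3, 4, 7}. -/
open SimpleGraph
open Fin.NatCast

/-- `S` is the set of left endpoints of a maximal induced matching of a path with `m` edges. -/
def GoodSet (m : ℕ) (S : Set ℕ) : Prop :=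
  (∀ a ∈ S, a < m) ∧
  (∀ a ∈ S, ∀ b ∈ S, a ≠ b → a + 3 ≤ b ∨ b + 3 ≤ a) ∧
  (∀ b < m, ∃ a ∈ S, a ≤ b + 2 ∧ b ≤ a + 2)

lemma goodA (m : ℕ) : GoodSet m ↑((Finset.range ((m+2)/3)).image (fun i => 3*i)) := by
  refine ⟨?_, ?_, ?_⟩
  · intro a ha
    simp only [Finset.coe_image, Set.mem_image, Finset.mem_coe, Finset.mem_range] at ha
    obtain ⟨i, hi, rfl⟩ := ha; omega
  · intro a ha b hb hab
    simp only [Finset.coe_image, Set.mem_image, Finset.mem_coe, Finset.mem_range] at ha hb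
    obtain ⟨i, hi, rfl⟩ := ha; obtain ⟨j, hj, rfl⟩ := hb; omega
  · intro b hb
    refine ⟨3 * (b/3), ?_, by omega⟩
    simp only [Finset.coe_image, Set.mem_image, Finset.mem_coe, Finset.mem_range]
    exact ⟨b/3, by omega, rfl⟩

lemma goodB (m : ℕ) (hm : 4 ≤ m) :
    GoodSet m ↑((Finset.range ((m+4)/5)).image (fun i => min (5*i+2) (m-1))) := by
  refine ⟨?_, ?_, ?_⟩
  · intro a ha
    simp only [Finset.coe_image, Set.mem_image, Finset.mem_coe, Finset.mem_range] at ha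
    obtain ⟨i, hi, rfl⟩ := ha; omega
  · intro a ha b hb hab
    simp only [Finset.coe_image, Set.mem_image, Finset.mem_coe, Finset.mem_range] at ha hb
    obtain ⟨i, hi, rfl⟩ := ha; obtain ⟨j, hj, rfl⟩ := hb; omega
  · intro b hb
    refine ⟨min (5*(b/5)+2) (m-1), ?_, by omega⟩
    simp only [Finset.coe_image, Set.mem_image, Finset.mem_coe, Finset.mem_range]
    exact ⟨b/5, by omega, rfl⟩

lemma cardA (m : ℕ) : (↑((Finset.range ((m+2)/3)).image (fun i => 3*i)) : Set ℕ).ncard = (m+2)/3 := by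
  rw [Set.ncard_coe_finset, Finset.card_image_of_injOn, Finset.card_range]
  intro i hi j hj h
  simp only [Finset.coe_range, Set.mem_Iio] at hi hj
  dsimp only at h; omega

lemma cardB (m : ℕ) (hm : 4 ≤ m) :
    (↑((Finset.range ((m+4)/5)).image (fun i => min (5*i+2) (m-1))) : Set ℕ).ncard = (m+4)/5 := by
  rw [Set.ncard_coe_finset, Finset.card_image_of_injOn, Finset.card_range]
  intro i hi j hj h
  simp only [Finset.coe_range, Set.mem_Iio] at hi hj
  dsimp only at h; omega

lemma good_card_iff (m : ℕ) :
    (∀ S T : Set ℕ, GoodSet m S → GoodSet m T → S.ncard = T.ncard) ↔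
      (m = 0 ∨ m = 1 ∨ m = 2 ∨ m = 3 ∨ m = 6) := by
  constructor
  · intro h
    by_contra hm
    push_neg at hm
    have hm4 : 4 ≤ m ∧ m ≠ 6 := by omega
    have := h _ _ (goodA m) (goodB m hm4.1)
    rw [cardA, cardB m hm4.1] at this
    omega
  · rintro hm S T hS hT
    have key : ∀ U : Set ℕ, GoodSet m U →
        U.ncard = (if m = 0 then 0 else if m = 6 then 2 else 1) := by
      intro U hU
      obtain ⟨h1, h2, h3⟩ := hU
      rcases hm with rfl | rfl | rfl | rfl | rfl
      · simp only [if_pos rfl]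
        have : U = ∅ := by
          ext a; simp only [Set.mem_empty_iff_false, iff_false]
          intro ha; exact absurd (h1 a ha) (by omega)
        simp [this]
      · obtain ⟨a, ha, hd⟩ := h3 0 (by norm_num)
        have : U = {a} := by
          ext x; simp only [Set.mem_singleton_iff]
          constructor
          · intro hx
            by_contra hxa
            have := h2 x hx a ha hxa
            have := h1 x hx; have := h1 a ha; omega
          · rintro rfl; exact ha
        simp [this]
      · obtain ⟨a, ha, hd⟩ := h3 0 (by norm_num)
        have : U = {a} := by
          ext x; simp only [Set.mem_singleton_iff]
          constructor
          · intro hx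
            by_contra hxa
            have := h2 x hx a ha hxa
            have := h1 x hx; have := h1 a ha; omega
          · rintro rfl; exact ha
        simp [this]
      · obtain ⟨a, ha, hd⟩ := h3 0 (by norm_num)
        have : U = {a} := by
          ext x; simp only [Set.mem_singleton_iff]
          constructor
          · intro hx
            by_contra hxa
            have := h2 x hx a ha hxa
            have := h1 x hx; have := h1 a ha; omega
          · rintro rfl; exact ha
        simp [this]
      · obtain ⟨a, ha, hda⟩ := h3 0 (by norm_num)
        obtain ⟨c, hc, hdc⟩ := h3 5 (by norm_num)
        have hac : a ≠ c := by
          intro h; subst h; omega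
        have hgac := h2 a ha c hc hac
        have : U = {a, c} := by
          ext x
          simp only [Set.mem_insert_iff, Set.mem_singleton_iff]
          constructor
          · intro hx
            by_contra hxx
            push_neg at hxx
            have g1 := h2 x hx a ha hxx.1
            have g2 := h2 x hx c hc hxx.2
            have := h1 x hx; have := h1 a ha; have := h1 c hc
            omega
          · rintro (rfl | rfl); exacts [ha, hc]
        rw [this, Set.ncard_pair hac]
        norm_num
    rw [key S hS, key T hT]

section PathGraph
variable {n : ℕ} [NeZero n]

/-- The edge of the path graph with left endpoint `a`. -/
def edgeAt (n : ℕ) [NeZero n] (a : ℕ) : Sym2 (Fin n) := s((a : Fin n), ((a+1 : ℕ) : Fin n))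

/-- The left endpoint (as a natural number) of an edge. -/
def lep : Sym2 (Fin n) → ℕ :=
  Sym2.lift ⟨fun a b => min a.val b.val, fun a b => min_comm _ _⟩

lemma lep_edgeAt {a : ℕ} (h : a + 1 < n) : lep (edgeAt n a) = a := by
  simp only [edgeAt, lep, Sym2.lift_mk]
  rw [Fin.val_cast_of_lt (by omega), Fin.val_cast_of_lt h]
  omega

lemma edgeAt_mem {a : ℕ} (h : a + 1 < n) : edgeAt n a ∈ (pathGraph n).edgeSet := by
  rw [edgeAt, mem_edgeSet, pathGraph_adj]
  rw [Fin.val_cast_of_lt (by omega), Fin.val_cast_of_lt h]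
  left; rfl

/-- Canonical form of an edge of the path graph. -/
lemma edge_canon {e : Sym2 (Fin n)} (he : e ∈ (pathGraph n).edgeSet) :
    lep e + 1 < n ∧ e = edgeAt n (lep e) := by
  induction e using Sym2.ind with
  | _ u v =>
    rw [mem_edgeSet, pathGraph_adj] at he
    rcases he with h | h
    · have hl : lep s(u, v) = u.val := by simp only [lep, Sym2.lift_mk]; omega
      rw [hl]
      refine ⟨by omega, ?_⟩
      have h1 : ((u.val : ℕ) : Fin n) = u := Fin.cast_val_eq_self u
      have h2 : ((u.val + 1 : ℕ) : Fin n) = v := by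
        apply Fin.ext
        rw [Fin.val_cast_of_lt (by omega)]; exact h
      rw [edgeAt, h1, h2]
    · have hl : lep s(u, v) = v.val := by simp only [lep, Sym2.lift_mk]; omega
      rw [hl]
      refine ⟨by omega, ?_⟩
      have h1 : ((v.val : ℕ) : Fin n) = v := Fin.cast_val_eq_self v
      have h2 : ((v.val + 1 : ℕ) : Fin n) = u := by
        apply Fin.ext
        rw [Fin.val_cast_of_lt (by omega)]; exact h
      rw [edgeAt, h1, h2, Sym2.eq_swap]

lemma mem_edgeAt {a : ℕ} (h : a + 1 < n) {u : Fin n} :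
    u ∈ edgeAt n a ↔ u.val = a ∨ u.val = a + 1 := by
  rw [edgeAt, Sym2.mem_iff, Fin.ext_iff, Fin.ext_iff,
    Fin.val_cast_of_lt (by omega), Fin.val_cast_of_lt h]

lemma compat_of_gap {a b : ℕ} (ha : a + 1 < n) (hb : b + 1 < n)
    (hgap : a + 3 ≤ b ∨ b + 3 ≤ a) :
    ∀ u ∈ edgeAt n a, ∀ v ∈ edgeAt n b, u ≠ v ∧ ¬ (pathGraph n).Adj u v := by
  intro u hu v hv
  rw [mem_edgeAt ha] at hu
  rw [mem_edgeAt hb] at hv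
  constructor
  · intro h
    have := congrArg Fin.val h
    omega
  · rw [pathGraph_adj]
    omega

lemma gap_of_compat {a b : ℕ} (ha : a + 1 < n) (hb : b + 1 < n) (hab : a ≠ b)
    (h : ∀ u ∈ edgeAt n a, ∀ v ∈ edgeAt n b, u ≠ v ∧ ¬ (pathGraph n).Adj u v) :
    a + 3 ≤ b ∨ b + 3 ≤ a := by
  have m1 : ((a : ℕ) : Fin n) ∈ edgeAt n a := by
    rw [mem_edgeAt ha]; left; exact Fin.val_cast_of_lt (by omega)
  have m2 : ((a + 1 : ℕ) : Fin n) ∈ edgeAt n a := by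
    rw [mem_edgeAt ha]; right; exact Fin.val_cast_of_lt ha
  have m3 : ((b : ℕ) : Fin n) ∈ edgeAt n b := by
    rw [mem_edgeAt hb]; left; exact Fin.val_cast_of_lt (by omega)
  have m4 : ((b + 1 : ℕ) : Fin n) ∈ edgeAt n b := by
    rw [mem_edgeAt hb]; right; exact Fin.val_cast_of_lt hb
  have h1 := (h _ m1 _ m3).2
  have h2 := (h _ m1 _ m4).2
  have h3 := (h _ m2 _ m3).2
  have h4 := (h _ m2 _ m4).2
  rw [pathGraph_adj] at h1 h2 h3 h4
  simp only [Fin.val_cast_of_lt (show a < n by omega), Fin.val_cast_of_lt ha,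
    Fin.val_cast_of_lt (show b < n by omega), Fin.val_cast_of_lt hb] at h1 h2 h3 h4
  omega

lemma good_of_max {M : Set (Sym2 (Fin n))}
    (hM : IsMaximalInducedMatching (pathGraph n) M) :
    GoodSet (n-1) (lep '' M) ∧ (lep '' M).ncard = M.ncard := by
  obtain ⟨⟨hsub, hind⟩, hmax⟩ := hM
  have hcanon : ∀ e ∈ M, lep e + 1 < n ∧ e = edgeAt n (lep e) :=
    fun e he => edge_canon (hsub he)
  constructor
  · refine ⟨?_, ?_, ?_⟩
    · rintro a ⟨e, he, rfl⟩
      have := (hcanon e he).1; omega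
    · rintro a ⟨e, he, rfl⟩ b ⟨f, hf, rfl⟩ hab
      have hef : e ≠ f := fun h => hab (by rw [h])
      obtain ⟨he1, he2⟩ := hcanon e he
      obtain ⟨hf1, hf2⟩ := hcanon f hf
      refine gap_of_compat he1 hf1 hab ?_
      rw [← he2, ← hf2]
      exact hind e he f hf hef
    · intro b hb
      by_contra hdom
      push_neg at hdom
      have hb1 : b + 1 < n := by
        have := Nat.pos_of_ne_zero (NeZero.ne n); omega
      -- `M ∪ {edgeAt n b}` is an induced matching
      have hne : ∀ e ∈ M, edgeAt n b ≠ e := by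
        intro e he h
        have := (hcanon e he).1
        have : lep e ∈ lep '' M := ⟨e, he, rfl⟩
        have hd := hdom _ this
        have : lep e = b := by rw [← h, lep_edgeAt hb1]
        omega
      have hgap : ∀ e ∈ M, lep e + 3 ≤ b ∨ b + 3 ≤ lep e := by
        intro e he
        have h1 := (hcanon e he).1
        have hd := hdom (lep e) ⟨e, he, rfl⟩
        omega
      have hN : IsInducedMatching (pathGraph n) (insert (edgeAt n b) M) := by
        constructor
        · rintro e (rfl | he)
          · exact edgeAt_mem hb1
          · exact hsub he
        · rintro e (rfl | he) f (rfl | hf) hef u hu v hv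
          · exact absurd rfl hef
          · have := (hcanon f hf).2
            rw [this] at hv
            exact compat_of_gap hb1 (hcanon f hf).1
              (by have := hgap f hf; omega) u hu v hv
          · have := (hcanon e he).2
            rw [this] at hu
            exact compat_of_gap (hcanon e he).1 hb1
              (by have := hgap e he; omega) u hu v hv
          · exact hind e he f hf hef u hu v hv
      have := hmax _ hN (Set.subset_insert _ _)
      have hmem : edgeAt n b ∈ M := by
        rw [← this]; exact Set.mem_insert _ _
      exact hne _ hmem rfl
  · apply Set.ncard_image_of_injOn
    intro e he f hf h
    rw [(hcanon e he).2, (hcanon f hf).2, h]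

lemma max_of_good {S : Set ℕ} (hS : GoodSet (n-1) S) :
    IsMaximalInducedMatching (pathGraph n) (edgeAt n '' S) ∧
      (edgeAt n '' S).ncard = S.ncard := by
  obtain ⟨h1, h2, h3⟩ := hS
  have hlt : ∀ a ∈ S, a + 1 < n := by
    intro a ha
    have := h1 a ha
    have := Nat.pos_of_ne_zero (NeZero.ne n); omega
  have hinj : Set.InjOn (edgeAt n) S := by
    intro a ha b hb h
    rw [← lep_edgeAt (hlt a ha), ← lep_edgeAt (hlt b hb), h]
  have hind : IsInducedMatching (pathGraph n) (edgeAt n '' S) := by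
    constructor
    · rintro e ⟨a, ha, rfl⟩
      exact edgeAt_mem (hlt a ha)
    · rintro e ⟨a, ha, rfl⟩ f ⟨b, hb, rfl⟩ hef
      have hab : a ≠ b := fun h => hef (by rw [h])
      exact compat_of_gap (hlt a ha) (hlt b hb) (h2 a ha b hb hab)
  refine ⟨⟨hind, ?_⟩, ?_⟩
  · intro N hN hsub
    refine Set.Subset.antisymm ?_ hsub
    intro f hf
    obtain ⟨hb1, hcan⟩ := edge_canon (hN.1 hf)
    set b := lep f with hb
    obtain ⟨a, ha, hd⟩ := h3 b (by omega)
    by_cases hab : a = b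
    · rw [hcan, ← hab]; exact ⟨a, ha, rfl⟩
    · exfalso
      have hmem : edgeAt n a ∈ N := hsub ⟨a, ha, rfl⟩
      have hne : edgeAt n a ≠ f := by
        intro h
        exact hab (by rw [← lep_edgeAt (hlt a ha), h])
      have := gap_of_compat (hlt a ha) hb1 hab
        (by rw [← hcan]; exact hN.2 _ hmem _ hf hne)
      omega
  · exact Set.ncard_image_of_injOn hinj

end PathGraph

/-- The path `Pₙ` on `n ≥ 1` vertices is well-indumatched iff `n ∈ {1,2,3,4,7}`. -/
theorem stmt_3 (n : ℕ) (hn : 0 < n) :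
    WellIndumatched (SimpleGraph.pathGraph n) ↔ n ∈ ({1, 2, 3, 4, 7} : Set ℕ) := by
  haveI : NeZero n := ⟨hn.ne'⟩
  have key : WellIndumatched (pathGraph n) ↔
      ∀ S T : Set ℕ, GoodSet (n-1) S → GoodSet (n-1) T → S.ncard = T.ncard := by
    constructor
    · intro h S T hS hT
      obtain ⟨hMS, hcS⟩ := max_of_good hS
      obtain ⟨hMT, hcT⟩ := max_of_good hT
      rw [← hcS, ← hcT]
      exact h _ _ hMS hMT
    · intro h M N hM hN
      obtain ⟨hGS, hcS⟩ := good_of_max hM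
      obtain ⟨hGT, hcT⟩ := good_of_max hN
      rw [← hcS, ← hcT]
      exact h _ _ hGS hGT
  rw [key, good_card_iff]
  simp only [Set.mem_insert_iff, Set.mem_singleton_iff]
  omega
end

section
/- For every integer n ≥ 3, the cycle C_n on n vertices is well-indumatched if and only if n ∈ {3, 4, 5, 6, 7, 8, 11}. -/
open SimpleGraph

namespace WIAux

open Fin.NatCast Fin.CommRing

variable {n : ℕ} [NeZero n]

omit [NeZero n] in
lemma sub_val_of_le (x y : Fin n) (h : y.val ≤ x.val) : (x - y).val = x.val - y.val := by
  rw [Fin.sub_def]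
  have hx := x.isLt; have hy := y.isLt
  show (n - y.val + x.val) % n = _
  have e : n - y.val + x.val = n + (x.val - y.val) := by omega
  rw [e, Nat.add_mod_left, Nat.mod_eq_of_lt (by omega)]

omit [NeZero n] in
lemma sub_val_of_lt (x y : Fin n) (h : x.val < y.val) : (x - y).val = n + x.val - y.val := by
  rw [Fin.sub_def]
  have hx := x.isLt; have hy := y.isLt
  show (n - y.val + x.val) % n = _
  rw [Nat.mod_eq_of_lt (by omega)]
  omega

lemma val_one3 (hn : 3 ≤ n) : (1 : Fin n).val = 1 := by
  rw [Fin.val_one']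
  exact Nat.mod_eq_of_lt (by omega)

lemma eq_succ_of_sub_val (hn : 3 ≤ n) {u v : Fin n} (h : (u - v).val = 1) : u = v + 1 := by
  have h1 : u - v = 1 := Fin.ext (by rw [h, val_one3 hn])
  rw [sub_eq_iff_eq_add] at h1
  rw [h1, add_comm]

lemma adj_succ (hn : 3 ≤ n) (x : Fin n) : (cycleGraph n).Adj x (x + 1) := by
  rw [cycleGraph_adj']
  right
  rw [add_sub_cancel_left, val_one3 hn]

lemma edge_form (hn : 3 ≤ n) {e : Sym2 (Fin n)} (he : e ∈ (cycleGraph n).edgeSet) :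
    ∃ w : Fin n, e = s(w, w + 1) := by
  induction e with
  | h u v =>
    rw [mem_edgeSet, cycleGraph_adj'] at he
    rcases he with h | h
    · exact ⟨v, by rw [eq_succ_of_sub_val hn h]; exact Sym2.eq_swap⟩
    · exact ⟨u, by rw [eq_succ_of_sub_val hn h]⟩

lemma sep (hn : 3 ≤ n) {x y : ℕ} (hy : y < n) (h1 : x + 2 ≤ y) (h2 : y + 2 ≤ n + x) :
    (x : Fin n) ≠ (y : Fin n) ∧ ¬ (cycleGraph n).Adj (x : Fin n) (y : Fin n) := by
  have hx : x < n := by omega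
  have hvx : ((x : Fin n)).val = x := Nat.mod_eq_of_lt hx
  have hvy : ((y : Fin n)).val = y := Nat.mod_eq_of_lt hy
  have hlt : ((x : Fin n)).val < ((y : Fin n)).val := by omega
  have h3 : ((y : Fin n) - (x : Fin n)).val = y - x := by
    rw [sub_val_of_le _ _ (le_of_lt hlt), hvx, hvy]
  have h4 : ((x : Fin n) - (y : Fin n)).val = n + x - y := by
    rw [sub_val_of_lt _ _ hlt, hvx, hvy]
  constructor
  · intro h
    have := congrArg Fin.val h
    omega
  · rw [cycleGraph_adj']
    omega

lemma IM_insert {V : Type*} {G : SimpleGraph V} {M : Set (Sym2 V)} {e : Sym2 V}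
    (hM : IsInducedMatching G M) (he : e ∈ G.edgeSet)
    (h : ∀ f ∈ M, ∀ u ∈ e, ∀ x ∈ f, u ≠ x ∧ ¬ G.Adj u x) :
    IsInducedMatching G (insert e M) := by
  constructor
  · intro g hg
    rcases hg with rfl | hg
    · exact he
    · exact hM.1 hg
  · intro a ha b hb hab u hu v hv
    rcases ha with rfl | ha <;> rcases hb with rfl | hb
    · exact absurd rfl hab
    · exact h b hb u hu v hv
    · obtain ⟨h1, h2⟩ := h a ha v hv u hu
      exact ⟨h1.symm, fun had => h2 had.symm⟩
    · exact hM.2 a ha b hb hab u hu v hv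

/-- `x` lies in the "window" `{w-1, w, w+1, w+2}`. -/
def Near (w x : Fin n) : Prop := x = w ∨ x = w + 1 ∨ x + 1 = w ∨ x = w + 1 + 1

lemma clash_of_near (hn : 3 ≤ n) {w x : Fin n} (hnear : Near w x) :
    ∃ u ∈ s(w, w + 1), u = x ∨ (cycleGraph n).Adj u x := by
  rcases hnear with h | h | h | h
  · exact ⟨w, Sym2.mem_mk_left _ _, Or.inl h.symm⟩
  · exact ⟨w + 1, Sym2.mem_mk_right _ _, Or.inl h.symm⟩
  · exact ⟨w, Sym2.mem_mk_left _ _, Or.inr (by rw [← h]; exact (adj_succ hn x).symm)⟩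
  · exact ⟨w + 1, Sym2.mem_mk_right _ _, Or.inr (by rw [h]; exact adj_succ hn (w + 1))⟩

lemma maximal_of_cover (hn : 3 ≤ n) {M : Set (Sym2 (Fin n))}
    (hM : IsInducedMatching (cycleGraph n) M)
    (hcov : ∀ w : Fin n, ∃ f ∈ M, ∃ x ∈ f, Near w x) :
    IsMaximalInducedMatching (cycleGraph n) M := by
  refine ⟨hM, fun N hN hMN => ?_⟩
  refine Set.Subset.antisymm (fun e heN => ?_) hMN
  obtain ⟨w, rfl⟩ := edge_form hn (hN.1 heN)
  obtain ⟨f, hfM, x, hxf, hnear⟩ := hcov w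
  by_cases hef : s(w, w + 1) = f
  · rw [hef]; exact hfM
  · obtain ⟨u, hu, hclash⟩ := clash_of_near hn hnear
    obtain ⟨h1, h2⟩ := hN.2 _ heN f (hMN hfM) hef u hu x hxf
    rcases hclash with h | h
    · exact absurd h h1
    · exact absurd h h2

lemma exists_clash_of_maximal (hn : 3 ≤ n) {M : Set (Sym2 (Fin n))}
    (hM : IsMaximalInducedMatching (cycleGraph n) M) (v : Fin n) (hev : s(v, v + 1) ∉ M) :
    ∃ f ∈ M, ∃ u ∈ s(v, v + 1), ∃ x ∈ f, u = x ∨ (cycleGraph n).Adj u x := by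
  by_contra hcon
  push_neg at hcon
  have hIM : IsInducedMatching (cycleGraph n) (insert s(v, v + 1) M) := by
    refine IM_insert hM.1 (by rw [mem_edgeSet]; exact adj_succ hn v) ?_
    intro f hf u hu x hx
    exact hcon f hf u hu x hx
  have := hM.2 _ hIM (Set.subset_insert _ _)
  exact hev (this ▸ Set.mem_insert _ _)


lemma upper (hn : 3 ≤ n) {M : Set (Sym2 (Fin n))}
    (hM : IsInducedMatching (cycleGraph n) M) : 3 * M.ncard ≤ n := by
  classical
  have h10 : (1 : Fin n) ≠ 0 := by
    intro h
    have := congrArg Fin.val h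
    rw [val_one3 hn] at this
    simp at this
  have h110 : (1 : Fin n) + 1 ≠ 0 := by
    intro h
    have := congrArg Fin.val h
    rw [Fin.val_add, val_one3 hn, Fin.val_zero, Nat.mod_eq_of_lt (by omega)] at this
    simp at this
  have hfin : M.Finite := Set.toFinite M
  have hwex : ∀ e : Sym2 (Fin n), ∃ a : Fin n, e ∈ (cycleGraph n).edgeSet → e = s(a, a + 1) := by
    intro e
    by_cases h : e ∈ (cycleGraph n).edgeSet
    · obtain ⟨a, ha⟩ := edge_form hn h
      exact ⟨a, fun _ => ha⟩
    · exact ⟨0, fun h' => absurd h' h⟩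
  choose w hw using hwex
  have hmemw : ∀ e ∈ M, w e ∈ e := by
    intro e he
    have : w e ∈ s(w e, w e + 1) := Sym2.mem_mk_left _ _
    rwa [← hw e (hM.1 he)] at this
  have hmemw1 : ∀ e ∈ M, w e + 1 ∈ e := by
    intro e he
    have : w e + 1 ∈ s(w e, w e + 1) := Sym2.mem_mk_right _ _
    rwa [← hw e (hM.1 he)] at this
  set F := hfin.toFinset with hF
  set B : Sym2 (Fin n) → Finset (Fin n) := fun e => {w e, w e + 1, w e + 1 + 1} with hB
  have hcard3 : ∀ e, (B e).card = 3 := by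
    intro e
    have hne1 : w e ≠ w e + 1 := by
      intro h
      exact h10 (add_eq_left.mp h.symm)
    have hne2 : w e ≠ w e + 1 + 1 := by
      intro h
      rw [add_assoc] at h
      exact h110 (add_eq_left.mp h.symm)
    have hne3 : w e + 1 ≠ w e + 1 + 1 := by
      intro h
      exact h10 (add_eq_left.mp h.symm)
    show ({w e, w e + 1, w e + 1 + 1} : Finset (Fin n)).card = 3
    rw [Finset.card_insert_of_notMem (by
      simp only [Finset.mem_insert, Finset.mem_singleton]
      push_neg
      exact ⟨hne1, hne2⟩)]
    rw [Finset.card_insert_of_notMem (by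
      simp only [Finset.mem_singleton]
      exact hne3)]
    rfl
  have hdisj : ∀ e ∈ F, ∀ f ∈ F, e ≠ f → Disjoint (B e) (B f) := by
    intro e he f hf hef
    rw [hF, Set.Finite.mem_toFinset] at he hf
    rw [Finset.disjoint_left]
    intro c hce hcf
    simp only [hB, Finset.mem_insert, Finset.mem_singleton] at hce hcf
    have key := hM.2 e he f hf hef
    have hae := hmemw e he
    have ha1e := hmemw1 e he
    have hbf := hmemw f hf
    have hb1f := hmemw1 f hf
    rcases hce with h | h | h <;> rcases hcf with h' | h' | h'
    · exact absurd (h.symm.trans h') (key _ hae _ hbf).1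
    · exact absurd (h.symm.trans h') (key _ hae _ hb1f).1
    · exact (key _ hae _ hb1f).2 (by
        rw [h.symm.trans h']
        exact (adj_succ hn (w f + 1)).symm)
    · exact absurd (h.symm.trans h') (key _ ha1e _ hbf).1
    · exact absurd (add_right_cancel (h.symm.trans h')) (key _ hae _ hbf).1
    · exact absurd (add_right_cancel (h.symm.trans h')) (key _ hae _ hb1f).1
    · exact (key _ ha1e _ hbf).2 (by
        rw [← h.symm.trans h']
        exact adj_succ hn (w e + 1))
    · exact absurd (add_right_cancel (h.symm.trans h')) (key _ ha1e _ hbf).1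
    · exact absurd (add_right_cancel (add_right_cancel (h.symm.trans h')))
        (key _ hae _ hbf).1
  have hbu := Finset.card_biUnion hdisj
  have hsum : ∑ e ∈ F, (B e).card = 3 * F.card := by
    rw [Finset.sum_congr rfl (fun e _ => hcard3 e), Finset.sum_const, smul_eq_mul, mul_comm]
  have hle : (F.biUnion B).card ≤ n := by
    have := Finset.card_le_univ (F.biUnion B)
    simpa using this
  have hfin3 : 3 * F.card ≤ n := by
    rw [← hsum, ← hbu]
    exact hle
  rw [Set.ncard_eq_toFinset_card M hfin, ← hF]
  exact hfin3


lemma lower (hn : 3 ≤ n) {M : Set (Sym2 (Fin n))}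
    (hM : IsMaximalInducedMatching (cycleGraph n) M) : n ≤ 5 * M.ncard := by
  classical
  have hfin : M.Finite := Set.toFinite M
  have hwex : ∀ e : Sym2 (Fin n), ∃ a : Fin n, e ∈ (cycleGraph n).edgeSet → e = s(a, a + 1) := by
    intro e
    by_cases h : e ∈ (cycleGraph n).edgeSet
    · obtain ⟨a, ha⟩ := edge_form hn h
      exact ⟨a, fun _ => ha⟩
    · exact ⟨0, fun h' => absurd h' h⟩
  choose w hw using hwex
  set F := hfin.toFinset with hF
  set C : Sym2 (Fin n) → Finset (Fin n) :=
    fun e => {w e - 1 - 1, w e - 1, w e, w e + 1, w e + 1 + 1} with hC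
  have hcover : (Finset.univ : Finset (Fin n)) ⊆ F.biUnion C := by
    intro v _
    rw [Finset.mem_biUnion]
    by_cases hev : s(v, v + 1) ∈ M
    · refine ⟨s(v, v + 1), by rw [hF, Set.Finite.mem_toFinset]; exact hev, ?_⟩
      have heq := hw _ (hM.1.1 hev)
      rw [Sym2.eq_iff] at heq
      simp only [hC, Finset.mem_insert, Finset.mem_singleton]
      rcases heq with ⟨h1, _⟩ | ⟨h1, _⟩
      · exact Or.inr (Or.inr (Or.inl h1))
      · exact Or.inr (Or.inr (Or.inr (Or.inl h1)))
    · obtain ⟨f, hf, u, hu, x, hx, hclash⟩ := exists_clash_of_maximal hn hM v hev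
      refine ⟨f, by rw [hF, Set.Finite.mem_toFinset]; exact hf, ?_⟩
      have hxf := hw f (hM.1.1 hf)
      rw [hxf, Sym2.mem_iff] at hx
      rw [Sym2.mem_iff] at hu
      have hrel : u = x ∨ u = x + 1 ∨ x = u + 1 := by
        rcases hclash with h | h
        · exact Or.inl h
        · rw [cycleGraph_adj'] at h
          rcases h with h | h
          · exact Or.inr (Or.inl (eq_succ_of_sub_val hn h))
          · exact Or.inr (Or.inr (eq_succ_of_sub_val hn h))
      have hv5 : v = w f - 1 - 1 ∨ v = w f - 1 ∨ v = w f ∨ v = w f + 1 ∨ v = w f + 1 + 1 := by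
        rcases hu with rfl | rfl <;> rcases hx with rfl | rfl <;>
          rcases hrel with h3 | h3 | h3 <;>
          first
            | exact Or.inl (by linear_combination h3)
            | exact Or.inl (by linear_combination -h3)
            | exact Or.inr (Or.inl (by linear_combination h3))
            | exact Or.inr (Or.inl (by linear_combination -h3))
            | exact Or.inr (Or.inr (Or.inl (by linear_combination h3)))
            | exact Or.inr (Or.inr (Or.inl (by linear_combination -h3)))
            | exact Or.inr (Or.inr (Or.inr (Or.inl (by linear_combination h3))))
            | exact Or.inr (Or.inr (Or.inr (Or.inl (by linear_combination -h3))))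
            | exact Or.inr (Or.inr (Or.inr (Or.inr (by linear_combination h3))))
            | exact Or.inr (Or.inr (Or.inr (Or.inr (by linear_combination -h3))))
      simp only [hC, Finset.mem_insert, Finset.mem_singleton]
      exact hv5
  have h5 : ∀ e, (C e).card ≤ 5 := by
    intro e
    simp only [hC]
    have h0 := Finset.card_insert_le (w e - 1 - 1)
      ({w e - 1, w e, w e + 1, w e + 1 + 1} : Finset (Fin n))
    have h1 := Finset.card_insert_le (w e - 1) ({w e, w e + 1, w e + 1 + 1} : Finset (Fin n))
    have h2 := Finset.card_insert_le (w e) ({w e + 1, w e + 1 + 1} : Finset (Fin n))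
    have h3 := Finset.card_insert_le (w e + 1) ({w e + 1 + 1} : Finset (Fin n))
    have h4 : ({w e + 1 + 1} : Finset (Fin n)).card = 1 := Finset.card_singleton _
    omega
  have hbig : n ≤ 5 * F.card := by
    have h0 : (Finset.univ : Finset (Fin n)).card = n := by simp
    have h1 := Finset.card_le_card hcover
    have h2 := Finset.card_biUnion_le (s := F) (t := C)
    have h3 : ∑ e ∈ F, (C e).card ≤ ∑ _e ∈ F, 5 := Finset.sum_le_sum (fun e _ => h5 e)
    have h4 : ∑ _e ∈ F, 5 = 5 * F.card := by rw [Finset.sum_const, smul_eq_mul, mul_comm]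
    omega
  rw [Set.ncard_eq_toFinset_card M hfin, ← hF]
  exact hbig


lemma generic (hn : 3 ≤ n) {k : ℕ} (hk : 1 ≤ k) (f : ℕ → ℕ) (h0 : f 0 = 0)
    (hstep : ∀ i, i + 1 < k → f i + 3 ≤ f (i + 1) ∧ f (i + 1) ≤ f i + 5)
    (hlast : f (k - 1) + 3 ≤ n ∧ n ≤ f (k - 1) + 5) :
    ∃ M : Set (Sym2 (Fin n)), IsMaximalInducedMatching (cycleGraph n) M ∧ M.ncard = k := by
  classical
  have hcastsucc : ∀ m : ℕ, ((m + 1 : ℕ) : Fin n) = (m : Fin n) + 1 := fun m => by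
    push_cast; ring
  have hmono : ∀ i j, i < j → j < k → f i + 3 ≤ f j := by
    intro i j
    induction j with
    | zero => intro h1 _; omega
    | succ m ih =>
      intro h1 h2
      have hs := hstep m h2
      rcases Nat.lt_succ_iff_lt_or_eq.mp h1 with h | h
      · have := ih h (by omega)
        omega
      · subst h
        omega
  have hub : ∀ i, i < k → f i + 3 ≤ n := by
    intro i hi
    by_cases h : i = k - 1
    · subst h; exact hlast.1
    · have := hmono i (k - 1) (by omega) (by omega)
      have := hlast.1
      omega
  set g : ℕ → Sym2 (Fin n) := fun i => s((f i : Fin n), (f i : Fin n) + 1) with hg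
  set M : Set (Sym2 (Fin n)) := g '' Set.Iio k with hgM
  have hsep : ∀ i j, i < j → j < k → ∀ a b : ℕ, (a = f i ∨ a = f i + 1) →
      (b = f j ∨ b = f j + 1) →
      (a : Fin n) ≠ (b : Fin n) ∧ ¬ (cycleGraph n).Adj (a : Fin n) (b : Fin n) := by
    intro i j hij hjk a b ha hb
    have h1 := hmono i j hij hjk
    have h2 := hub j hjk
    have h3 := hub i (lt_trans hij hjk)
    exact sep hn (by omega) (by omega) (by omega)
  have hIM : IsInducedMatching (cycleGraph n) M := by
    constructor
    · rintro e ⟨i, hi, rfl⟩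
      rw [mem_edgeSet]
      exact adj_succ hn _
    · rintro e ⟨i, hi, rfl⟩ e' ⟨j, hj, rfl⟩ hne u hu v hv
      simp only [Set.mem_Iio] at hi hj
      simp only [hg, Sym2.mem_iff] at hu hv
      have hij : i ≠ j := by rintro rfl; exact hne rfl
      obtain ⟨a, ha, rfl⟩ : ∃ a : ℕ, (a = f i ∨ a = f i + 1) ∧ u = (a : Fin n) := by
        rcases hu with rfl | rfl
        · exact ⟨f i, Or.inl rfl, rfl⟩
        · exact ⟨f i + 1, Or.inr rfl, (hcastsucc (f i)).symm⟩
      obtain ⟨b, hb, rfl⟩ : ∃ b : ℕ, (b = f j ∨ b = f j + 1) ∧ v = (b : Fin n) := by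
        rcases hv with rfl | rfl
        · exact ⟨f j, Or.inl rfl, rfl⟩
        · exact ⟨f j + 1, Or.inr rfl, (hcastsucc (f j)).symm⟩
      rcases lt_or_gt_of_ne hij with h | h
      · exact hsep i j h hj a b ha hb
      · have := hsep j i h hi b a hb ha
        exact ⟨fun hh => this.1 hh.symm, fun hh => this.2 hh.symm⟩
  have hcov : ∀ w : Fin n, ∃ e ∈ M, ∃ x ∈ e, Near w x := by
    intro w
    obtain ⟨m, hmn, rfl⟩ : ∃ m : ℕ, m < n ∧ w = (m : Fin n) :=
      ⟨w.val, w.isLt, (Fin.cast_val_eq_self w).symm⟩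
    have hspec := Nat.findGreatest_spec (P := fun i => i < k ∧ f i ≤ m)
      (Nat.zero_le (k - 1)) ⟨by omega, by omega⟩
    set i0 := Nat.findGreatest (fun i => i < k ∧ f i ≤ m) (k - 1) with hi0
    obtain ⟨hi0k, hfi0⟩ := hspec
    by_cases hcase : m ≤ f i0 + 2
    · refine ⟨g i0, ⟨i0, hi0k, rfl⟩, ?_⟩
      rcases (by omega : m = f i0 ∨ m = f i0 + 1 ∨ m = f i0 + 2) with h | h | h
      · exact ⟨(f i0 : Fin n), Sym2.mem_mk_left _ _, Or.inl (by rw [h])⟩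
      · refine ⟨(f i0 : Fin n), Sym2.mem_mk_left _ _, Or.inr (Or.inr (Or.inl ?_))⟩
        rw [h, hcastsucc]
      · refine ⟨(f i0 : Fin n) + 1, Sym2.mem_mk_right _ _, Or.inr (Or.inr (Or.inl ?_))⟩
        rw [h, show f i0 + 2 = f i0 + 1 + 1 from rfl, hcastsucc, hcastsucc]
    · by_cases hnext : i0 + 1 < k
      · have hx : Nat.findGreatest (fun i => i < k ∧ f i ≤ m) (k - 1) < i0 + 1 := by
          rw [← hi0]
          omega
        have hnP := Nat.findGreatest_is_greatest hx (by omega)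
        have hgt : m < f (i0 + 1) := by
          by_contra hh
          push_neg at hh
          exact hnP ⟨hnext, hh⟩
        have hle5 := (hstep i0 hnext).2
        rcases (by omega : f (i0 + 1) = m + 1 ∨ f (i0 + 1) = m + 2) with h | h
        · refine ⟨g (i0 + 1), ⟨i0 + 1, hnext, rfl⟩, (f (i0 + 1) : Fin n),
            Sym2.mem_mk_left _ _, Or.inr (Or.inl ?_)⟩
          rw [h, hcastsucc]
        · refine ⟨g (i0 + 1), ⟨i0 + 1, hnext, rfl⟩, (f (i0 + 1) : Fin n),
            Sym2.mem_mk_left _ _, Or.inr (Or.inr (Or.inr ?_))⟩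
          rw [h, show m + 2 = m + 1 + 1 from rfl, hcastsucc, hcastsucc]
      · have hik : i0 = k - 1 := by omega
        rw [hik] at hcase hfi0
        have hl1 := hlast.1
        have hl2 := hlast.2
        rcases (by omega : n = m + 1 ∨ n = m + 2) with h | h
        · refine ⟨g 0, ⟨0, Set.mem_Iio.mpr (by omega), rfl⟩, (f 0 : Fin n), Sym2.mem_mk_left _ _,
            Or.inr (Or.inl ?_)⟩
          rw [h0, ← hcastsucc, ← h, Fin.natCast_self, Nat.cast_zero]
        · refine ⟨g 0, ⟨0, Set.mem_Iio.mpr (by omega), rfl⟩, (f 0 : Fin n), Sym2.mem_mk_left _ _,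
            Or.inr (Or.inr (Or.inr ?_))⟩
          rw [h0, ← hcastsucc, ← hcastsucc, show m + 1 + 1 = n from by omega,
            Fin.natCast_self, Nat.cast_zero]
  refine ⟨M, maximal_of_cover hn hIM hcov, ?_⟩
  have hinj : Set.InjOn g (Set.Iio k) := by
    intro i hi j hj hgij
    simp only [Set.mem_Iio] at hi hj
    by_contra hne
    rcases lt_or_gt_of_ne hne with h | h
    · have hmem : ((f i : ℕ) : Fin n) ∈ g j := by rw [← hgij]; exact Sym2.mem_mk_left _ _
      simp only [hg, Sym2.mem_iff] at hmem
      rcases hmem with hh | hh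
      · exact (hsep i j h hj (f i) (f j) (Or.inl rfl) (Or.inl rfl)).1 hh
      · exact (hsep i j h hj (f i) (f j + 1) (Or.inl rfl) (Or.inr rfl)).1
          (by rw [hh, hcastsucc])
    · have hmem : ((f j : ℕ) : Fin n) ∈ g i := by rw [hgij]; exact Sym2.mem_mk_left _ _
      simp only [hg, Sym2.mem_iff] at hmem
      rcases hmem with hh | hh
      · exact (hsep j i h hi (f j) (f i) (Or.inl rfl) (Or.inl rfl)).1 hh
      · exact (hsep j i h hi (f j) (f i + 1) (Or.inl rfl) (Or.inr rfl)).1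
          (by rw [hh, hcastsucc])
  rw [hgM, Set.ncard_image_of_injOn hinj, ← Finset.coe_range, Set.ncard_coe_finset,
    Finset.card_range]

end WIAux

section Main

open WIAux

/-- The cycle `Cₙ` on `n ≥ 3` vertices is well-indumatched iff `n ∈ {3,4,5,6,7,8,11}`. -/
theorem stmt_4 (n : ℕ) (hn : 3 ≤ n) :
    WellIndumatched (SimpleGraph.cycleGraph n) ↔
      n ∈ ({3, 4, 5, 6, 7, 8, 11} : Set ℕ) := by
  haveI : NeZero n := ⟨by omega⟩
  constructor
  · intro hWI
    by_contra hns
    simp only [Set.mem_insert_iff, Set.mem_singleton_iff] at hns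
    push_neg at hns
    have h9 : 9 ≤ n := by omega
    have h11 : n ≠ 11 := by omega
    obtain ⟨M1, hM1, hc1⟩ := generic hn (k := n / 3) (by omega) (fun i => 3 * i)
      (by simp)
      (fun i hi => ⟨show 3 * i + 3 ≤ 3 * (i + 1) by omega,
        show 3 * (i + 1) ≤ 3 * i + 5 by omega⟩)
      ⟨show 3 * (n / 3 - 1) + 3 ≤ n by omega, show n ≤ 3 * (n / 3 - 1) + 5 by omega⟩
    obtain ⟨M2, hM2, hc2⟩ := generic hn (k := n / 3 - 1) (by omega)
      (fun i => 3 * i + min (2 * i) (n % 3 + 3))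
      (by simp)
      (fun i hi => ⟨show 3 * i + min (2 * i) (n % 3 + 3) + 3 ≤
          3 * (i + 1) + min (2 * (i + 1)) (n % 3 + 3) by omega,
        show 3 * (i + 1) + min (2 * (i + 1)) (n % 3 + 3) ≤
          3 * i + min (2 * i) (n % 3 + 3) + 5 by omega⟩)
      ⟨show 3 * (n / 3 - 1 - 1) + min (2 * (n / 3 - 1 - 1)) (n % 3 + 3) + 3 ≤ n by omega,
        show n ≤ 3 * (n / 3 - 1 - 1) + min (2 * (n / 3 - 1 - 1)) (n % 3 + 3) + 5 by omega⟩
    have heq := hWI M1 M2 hM1 hM2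
    rw [hc1, hc2] at heq
    omega
  · intro hS M N hM hN
    have u1 := upper hn hM.1
    have u2 := upper hn hN.1
    have l1 := lower hn hM
    have l2 := lower hn hN
    simp only [Set.mem_insert_iff, Set.mem_singleton_iff] at hS
    omega

end Main
end

section
/- Let G be a connected well-indumatched graph and let e = uv be a cut-edge of G. If there exist vertices x and y with x ≠ v and y ∉ {u, v} such that u x y is a path in G (so ux and xy are edges), then the connected component of G − e containing v is well-indumatched. -/
open SimpleGraph

/-- Induced matchings are downward closed. -/
lemma IsInducedMatching.mono {V : Type*} {G : SimpleGraph V} {M N : Set (Sym2 V)}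
    (h : IsInducedMatching G N) (hMN : M ⊆ N) : IsInducedMatching G M :=
  ⟨hMN.trans h.1, fun e he f hf => h.2 e (hMN he) f (hMN hf)⟩

/-- Let `G` be a connected well-indumatched graph and `uv` a cut-edge of `G`. If there is
a path `u x y` with `x ≠ v` and `y ∉ {u, v}`, then the connected component of `G − uv`
containing `v` is well-indumatched. -/
theorem stmt_5 {V : Type*} [Fintype V] (G : SimpleGraph V) (hconn : G.Connected)
    (hWIM : WellIndumatched G) (u v : V) (hbridge : G.IsBridge s(u, v))
    (x y : V) (hxv : x ≠ v) (hyu : y ≠ u) (hyv : y ≠ v)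
    (hux : G.Adj u x) (hxy : G.Adj x y) :
    WellIndumatched
      ((G.deleteEdges {s(u, v)}).induce
        ((G.deleteEdges {s(u, v)}).connectedComponentMk v).supp) := by
  classical
  set G' : SimpleGraph V := G.deleteEdges {s(u, v)} with hG'def
  set B : Set V := (G'.connectedComponentMk v).supp with hBdef
  set H : SimpleGraph B := G'.induce B with hHdef
  -- basic membership facts
  have hmemB : ∀ {w : V}, w ∈ B ↔ G'.Reachable w v := by
    intro w
    rw [hBdef, ConnectedComponent.mem_supp_iff, ConnectedComponent.eq]
  have hvB : v ∈ B := hmemB.mpr (Reachable.refl v)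
  have hnreach : ¬ G'.Reachable u v := isBridge_iff.mp hbridge
  have huB : u ∉ B := fun h => hnreach (hmemB.mp h)
  have hclosed : ∀ {a b : V}, a ∈ B → G'.Adj a b → b ∈ B := by
    intro a b ha hab
    exact hmemB.mpr ((hab.symm.reachable).trans (hmemB.mp ha))
  -- the edge ux and xy survive in G'
  have hux' : G'.Adj u x := by
    rw [hG'def, deleteEdges_adj]
    refine ⟨hux, ?_⟩
    simp only [Set.mem_singleton_iff, Sym2.eq_iff]
    rintro (⟨-, h⟩ | ⟨h, -⟩)
    · exact hxv h
    · exact (isBridge_iff.mp hbridge) (by subst h; exact Reachable.refl _)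
  have hxB : x ∉ B := fun h => huB (hclosed h hux'.symm)
  have hxy' : G'.Adj x y := by
    rw [hG'def, deleteEdges_adj]
    refine ⟨hxy, ?_⟩
    simp only [Set.mem_singleton_iff, Sym2.eq_iff]
    rintro (⟨-, h⟩ | ⟨h, -⟩)
    · exact hyv h
    · exact hxv h
  have hyB : y ∉ B := fun h => hxB (hclosed h hxy'.symm)
  -- G-adjacency within B is G'-adjacency
  have hadjBB : ∀ {a b : V}, a ∈ B → b ∈ B → G.Adj a b → G'.Adj a b := by
    intro a b ha hb hab
    rw [hG'def, deleteEdges_adj]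
    refine ⟨hab, ?_⟩
    simp only [Set.mem_singleton_iff, Sym2.eq_iff]
    rintro (⟨h, -⟩ | ⟨-, h⟩)
    · exact huB (h ▸ ha)
    · exact huB (h ▸ hb)
  -- a G-edge from B to outside B must be vu
  have hcross : ∀ {a b : V}, a ∈ B → b ∉ B → G.Adj a b → a = v ∧ b = u := by
    intro a b ha hb hab
    by_cases h : s(a, b) = s(u, v)
    · rw [Sym2.eq_iff] at h
      rcases h with ⟨h1, h2⟩ | ⟨h1, h2⟩
      · exact absurd (h1 ▸ ha) huB
      · exact ⟨h1, h2⟩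
    · exact absurd (hclosed ha (by rw [hG'def, deleteEdges_adj]; exact ⟨hab, by simpa using h⟩)) hb
  -- choose a maximal induced matching S of the u-side containing xy
  set 𝒮 : Set (Set (Sym2 V)) :=
    {S | IsInducedMatching G S ∧ (∀ e ∈ S, ∀ w ∈ e, w ∉ B) ∧ s(x, y) ∈ S} with h𝒮def
  have h𝒮ne : 𝒮.Nonempty := by
    refine ⟨{s(x, y)}, ⟨⟨?_, ?_⟩, ?_, rfl⟩⟩
    · intro e he; rw [Set.mem_singleton_iff] at he; subst he; exact hxy
    · intro e he f hf hef
      rw [Set.mem_singleton_iff] at he hf; exact absurd (he.trans hf.symm) hef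
    · intro e he w hw
      rw [Set.mem_singleton_iff] at he; subst he
      rcases Sym2.mem_iff.mp hw with rfl | rfl
      · exact hxB
      · exact hyB
  obtain ⟨S, hS𝒮, hSmax⟩ :=
    Set.Finite.exists_maximalFor Set.ncard 𝒮 (Set.toFinite 𝒮) h𝒮ne
  obtain ⟨hSim, hSout, hxyS⟩ := hS𝒮
  -- no edge of S contains u
  have huS : ∀ e ∈ S, u ∉ e := by
    intro e he hu
    have hne : e ≠ s(x, y) := by
      rintro rfl
      rcases Sym2.mem_iff.mp hu with rfl | rfl
      · exact hux.ne rfl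
      · exact hyu rfl
    exact (hSim.2 e he s(x, y) hxyS hne u hu x (Sym2.mem_mk_left x y)).2 hux
  -- the pushforward of an edge set on B
  let ι : Set (Sym2 B) → Set (Sym2 V) := fun M => Sym2.map Subtype.val '' M
  have hιinj : Function.Injective (Sym2.map (Subtype.val : B → V)) :=
    Sym2.map.injective Subtype.val_injective
  have hmemlift : ∀ (a b : B) (w : V), w ∈ s((a : V), (b : V)) →
      ∃ w' : B, w' ∈ s(a, b) ∧ ↑w' = w := by
    intro a b w hw
    rcases Sym2.mem_iff.mp hw with rfl | rfl
    · exact ⟨a, Sym2.mem_mk_left a b, rfl⟩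
    · exact ⟨b, Sym2.mem_mk_right a b, rfl⟩
  have hιmem : ∀ (M : Set (Sym2 B)) (e : Sym2 V), e ∈ ι M →
      ∃ a b : B, e = s(↑a, ↑b) ∧ s(a, b) ∈ M := by
    intro M e he
    obtain ⟨e', he', rfl⟩ := he
    induction e' using Sym2.ind with
    | _ a b => exact ⟨a, b, (Sym2.map_pair_eq _ _ _), he'⟩
  -- main claim: for a maximal induced matching M of H, ι M ∪ S is maximal in G
  have hmain : ∀ M : Set (Sym2 B), IsMaximalInducedMatching H M →
      IsMaximalInducedMatching G (ι M ∪ S) := by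
    intro M hM
    have hMedge : ∀ a b : B, s(a, b) ∈ M → G.Adj ↑a ↑b := by
      intro a b hab
      have : H.Adj a b := hM.1.1 hab
      exact (G.deleteEdges_le {s(u, v)}) this
    constructor
    · constructor
      · -- subset of edge set
        rintro e (he | he)
        · obtain ⟨a, b, rfl, hab⟩ := hιmem M e he
          exact hMedge a b hab
        · exact hSim.1 he
      · -- pairwise condition
        rintro e (he | he) f (hf | hf) hef w hw z hz
        · -- both from M
          obtain ⟨a, b, rfl, hab⟩ := hιmem M e he
          obtain ⟨c, d, rfl, hcd⟩ := hιmem M f hf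
          obtain ⟨w', hw', rfl⟩ := hmemlift a b w hw
          obtain ⟨z', hz', rfl⟩ := hmemlift c d z hz
          have hne : s(a, b) ≠ s(c, d) := by
            intro h
            have h2 := congrArg (Sym2.map (Subtype.val : B → V)) h
            rw [Sym2.map_pair_eq, Sym2.map_pair_eq] at h2
            exact hef h2
          have := hM.1.2 s(a, b) hab s(c, d) hcd hne w' hw' z' hz'
          refine ⟨fun h => this.1 (Subtype.val_injective h), fun h => this.2 ?_⟩
          exact hadjBB w'.2 z'.2 h
        · -- e from M, f from S
          obtain ⟨a, b, rfl, hab⟩ := hιmem M e he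
          obtain ⟨w', hw', rfl⟩ := hmemlift a b w hw
          have hwB : (w' : V) ∈ B := w'.2
          have hzB : z ∉ B := hSout f hf z hz
          refine ⟨fun h => hzB (h ▸ hwB), fun h => ?_⟩
          obtain ⟨-, rfl⟩ := hcross hwB hzB h
          exact huS f hf hz
        · -- e from S, f from M
          obtain ⟨c, d, rfl, hcd⟩ := hιmem M f hf
          obtain ⟨z', hz', rfl⟩ := hmemlift c d z hz
          have hzB : (z' : V) ∈ B := z'.2
          have hwB : w ∉ B := hSout e he w hw
          refine ⟨fun h => hwB (h ▸ hzB), fun h => ?_⟩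
          obtain ⟨-, rfl⟩ := hcross hzB hwB h.symm
          exact huS e he hw
        · -- both from S
          exact hSim.2 e he f hf hef w hw z hz
    · -- maximality
      intro N hN hsub
      refine Set.Subset.antisymm ?_ hsub
      intro f hfN
      by_contra hfnot
      induction f using Sym2.ind with
      | _ a b =>
      have hGab : G.Adj a b := hN.1 hfN
      have hSsub : S ⊆ N := (Set.subset_union_right).trans hsub
      have hιsub : ι M ⊆ N := (Set.subset_union_left).trans hsub
      by_cases haB : a ∈ B
      · by_cases hbB : b ∈ B
        · -- inside B : contradicts maximality of M in H
          set a' : B := ⟨a, haB⟩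
          set b' : B := ⟨b, hbB⟩
          have hf'H : H.Adj a' b' := hadjBB haB hbB hGab
          have hf'M : s(a', b') ∉ M := by
            intro h
            exact hfnot (Or.inl ⟨s(a', b'), h, Sym2.map_pair_eq _ _ _⟩)
          have hind : IsInducedMatching H (M ∪ {s(a', b')}) := by
            constructor
            · rintro e (he | he)
              · exact hM.1.1 he
              · rw [Set.mem_singleton_iff] at he; subst he; exact hf'H
            · have key : ∀ e ∈ M, ∀ w ∈ e, ∀ z ∈ s(a', b'),
                  w ≠ z ∧ ¬ H.Adj w z := by
                intro e he w hw z hz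
                have heN : Sym2.map Subtype.val e ∈ N := hιsub ⟨e, he, rfl⟩
                have hne : Sym2.map Subtype.val e ≠ s(a, b) := by
                  intro h
                  exact hfnot (Or.inl ⟨e, he, h⟩)
                have hwm : (w : V) ∈ Sym2.map Subtype.val e :=
                  Sym2.mem_map.mpr ⟨w, hw, rfl⟩
                have hzm : (z : V) ∈ s(a, b) := by
                  rcases Sym2.mem_iff.mp hz with rfl | rfl
                  · exact Sym2.mem_mk_left a b
                  · exact Sym2.mem_mk_right a b
                have := hN.2 _ heN s(a, b) hfN hne w hwm z hzm
                exact ⟨fun h => this.1 (congrArg Subtype.val h),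
                  fun h => this.2 ((G.deleteEdges_le {s(u, v)}) h)⟩
              rintro e (he | he) g (hg | hg) heg w hw z hz
              · exact hM.1.2 e he g hg heg w hw z hz
              · rw [Set.mem_singleton_iff] at hg; subst hg
                exact key e he w hw z hz
              · rw [Set.mem_singleton_iff] at he; subst he
                have := key g hg z hz w hw
                exact ⟨this.1.symm, fun h => this.2 h.symm⟩
              · rw [Set.mem_singleton_iff] at he hg
                exact absurd (he.trans hg.symm) heg
          have := hM.2 (M ∪ {s(a', b')}) hind Set.subset_union_left
          exact hf'M (this ▸ Set.mem_union_right M rfl)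
        · -- a ∈ B, b ∉ B : edge is vu, contradicts xy ∈ S
          obtain ⟨rfl, rfl⟩ := hcross haB hbB hGab
          have hne : s(a, b) ≠ s(x, y) := by
            intro h
            exact hfnot (Or.inr (h ▸ hxyS))
          have := hN.2 s(a, b) hfN s(x, y) (hSsub hxyS) hne b
            (Sym2.mem_mk_right a b) x (Sym2.mem_mk_left x y)
          exact this.2 hux
      · by_cases hbB : b ∈ B
        · -- a ∉ B, b ∈ B : edge is uv
          obtain ⟨rfl, rfl⟩ := hcross hbB haB hGab.symm
          have hne : s(a, b) ≠ s(x, y) := by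
            intro h
            exact hfnot (Or.inr (h ▸ hxyS))
          have := hN.2 s(a, b) hfN s(x, y) (hSsub hxyS) hne a
            (Sym2.mem_mk_left a b) x (Sym2.mem_mk_left x y)
          exact this.2 hux
        · -- both outside B : contradicts maximality of S
          have hfS : s(a, b) ∉ S := fun h => hfnot (Or.inr h)
          have hT𝒮 : (insert s(a, b) S) ∈ 𝒮 := by
            refine ⟨hN.mono ?_, ?_, Set.mem_insert_iff.mpr (Or.inr hxyS)⟩
            · intro e he
              rcases Set.mem_insert_iff.mp he with rfl | he
              · exact hfN
              · exact hSsub he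
            · intro e he w hw
              rcases Set.mem_insert_iff.mp he with rfl | he
              · rcases Sym2.mem_iff.mp hw with rfl | rfl
                · exact haB
                · exact hbB
              · exact hSout e he w hw
          have hle : S.ncard ≤ (insert s(a, b) S).ncard :=
            Set.ncard_le_ncard (Set.subset_insert _ _) (Set.toFinite _)
          have := hSmax (j := insert s(a, b) S) hT𝒮 hle
          rw [Set.ncard_insert_of_notMem hfS (Set.toFinite S)] at this
          omega
  -- wrap up
  intro M N hM hN
  have h1 := hmain M hM
  have h2 := hmain N hN
  have heq := hWIM (ι M ∪ S) (ι N ∪ S) h1 h2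
  have hdisj : ∀ (P : Set (Sym2 B)), Disjoint (ι P) S := by
    intro P
    rw [Set.disjoint_left]
    intro e he heS
    obtain ⟨a, b, rfl, -⟩ := hιmem P e he
    exact hSout _ heS ↑a (Sym2.mem_mk_left _ _) a.2
  have hcard : ∀ (P : Set (Sym2 B)), (ι P ∪ S).ncard = P.ncard + S.ncard := by
    intro P
    rw [Set.ncard_union_eq (hdisj P) (Set.toFinite _) (Set.toFinite _),
      Set.ncard_image_of_injective P hιinj]
  rw [hcard M, hcard N] at heq
  omega
end

section
/- Let G be a graph. If G contains a path v1 v2 v3 v4 v5 on five distinct vertices (consecutive vertices adjacent) such that v1 and v5 have degree 1 in G and v2 has degree 2 in G, then G is not well-indumatched. -/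
open SimpleGraph

/-- An induced matching restricted to a subset is an induced matching. -/
lemma IsInducedMatching.anti {V : Type*} {G : SimpleGraph V} {M N : Set (Sym2 V)}
    (h : IsInducedMatching G M) (hsub : N ⊆ M) : IsInducedMatching G N :=
  ⟨hsub.trans h.1, fun e he f hf => h.2 e (hsub he) f (hsub hf)⟩

/-- If `G` contains a path `v₁ v₂ v₃ v₄ v₅` on five distinct vertices with
`deg v₁ = deg v₅ = 1` and `deg v₂ = 2`, then `G` is not well-indumatched. -/
theorem stmt_6 {V : Type*} [Fintype V] (G : SimpleGraph V) [DecidableRel G.Adj]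
    (v₁ v₂ v₃ v₄ v₅ : V) (hnodup : List.Nodup [v₁, v₂, v₃, v₄, v₅])
    (h12 : G.Adj v₁ v₂) (h23 : G.Adj v₂ v₃) (h34 : G.Adj v₃ v₄) (h45 : G.Adj v₄ v₅)
    (hd1 : G.degree v₁ = 1) (hd5 : G.degree v₅ = 1) (hd2 : G.degree v₂ = 2) :
    ¬ WellIndumatched G := by
  classical
  intro hwim
  simp only [List.nodup_cons, List.mem_cons, List.mem_singleton, List.not_mem_nil,
    or_false, not_or, List.nodup_nil, and_true] at hnodup
  obtain ⟨⟨n12, n13, n14, n15⟩, ⟨n23, n24, n25⟩, ⟨n34, n35⟩, n45⟩ := hnodup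
  -- neighbourhood facts
  have hN1 : ∀ u, G.Adj v₁ u → u = v₂ := by
    have hmem : v₂ ∈ G.neighborFinset v₁ := (mem_neighborFinset ..).mpr h12
    have heq : ({v₂} : Finset V) = G.neighborFinset v₁ :=
      Finset.eq_of_subset_of_card_le (Finset.singleton_subset_iff.mpr hmem)
        (by rw [Finset.card_singleton]; exact le_of_eq hd1)
    intro u hu
    have : u ∈ G.neighborFinset v₁ := (mem_neighborFinset ..).mpr hu
    rw [← heq] at this
    simpa using this
  have hN5 : ∀ u, G.Adj v₅ u → u = v₄ := by
    have hmem : v₄ ∈ G.neighborFinset v₅ := (mem_neighborFinset ..).mpr h45.symm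
    have heq : ({v₄} : Finset V) = G.neighborFinset v₅ :=
      Finset.eq_of_subset_of_card_le (Finset.singleton_subset_iff.mpr hmem)
        (by rw [Finset.card_singleton]; exact le_of_eq hd5)
    intro u hu
    have : u ∈ G.neighborFinset v₅ := (mem_neighborFinset ..).mpr hu
    rw [← heq] at this
    simpa using this
  have hN2 : ∀ u, G.Adj v₂ u → u = v₁ ∨ u = v₃ := by
    have heq : ({v₁, v₃} : Finset V) = G.neighborFinset v₂ := by
      refine Finset.eq_of_subset_of_card_le ?_ ?_
      · intro x hx
        rcases Finset.mem_insert.mp hx with rfl | hx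
        · exact (mem_neighborFinset ..).mpr h12.symm
        · rw [Finset.mem_singleton] at hx
          subst hx
          exact (mem_neighborFinset ..).mpr h23
      · rw [Finset.card_pair n13]; exact le_of_eq hd2
    intro u hu
    have : u ∈ G.neighborFinset v₂ := (mem_neighborFinset ..).mpr hu
    rw [← heq] at this
    simpa using this
  -- the two auxiliary families of induced matchings
  set P₅ : Set (Sym2 V) → Prop := fun L => IsInducedMatching G L ∧
      ∀ e ∈ L, ∀ u ∈ e, u ≠ v₁ ∧ u ≠ v₃ ∧ u ≠ v₄ ∧ u ≠ v₅ ∧ ¬ G.Adj v₃ u ∧ ¬ G.Adj v₄ u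
    with hP₅def
  obtain ⟨L₅, -, hL₅⟩ := Finite.exists_le_maximal (a := (∅ : Set (Sym2 V))) (p := P₅)
    ⟨⟨Set.empty_subset _, by simp⟩, by simp⟩
  set P₂ : Set (Sym2 V) → Prop := fun L => IsInducedMatching G L ∧
      (∀ e ∈ L, ∀ u ∈ e,
        u ≠ v₁ ∧ u ≠ v₂ ∧ u ≠ v₃ ∧ u ≠ v₄ ∧ u ≠ v₅ ∧ ¬ G.Adj v₄ u) ∧ L₅ ⊆ L
    with hP₂def
  have hP₂L₅ : P₂ L₅ := by
    refine ⟨hL₅.1.1, ?_, subset_rfl⟩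
    intro e he u hu
    obtain ⟨a1, a3, a4, a5, b3, b4⟩ := hL₅.1.2 e he u hu
    exact ⟨a1, fun h => b3 (h ▸ h23.symm), a3, a4, a5, b4⟩
  obtain ⟨L₂, hL₅sub, hL₂⟩ := Finite.exists_le_maximal (a := L₅) (p := P₂) hP₂L₅
  -- M = L₅ ∪ {v₃v₄} is a maximal induced matching
  have hav₅ := hL₅.1.2
  have hav₂ := hL₂.1.2.1
  have hMind : IsInducedMatching G (insert s(v₃, v₄) L₅) := by
    constructor
    · rintro e (rfl | he)
      · exact G.mem_edgeSet.mpr h34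
      · exact hL₅.1.1.1 he
    · rintro e (rfl | he) f (rfl | hf) hne u hu v hv
      · exact absurd rfl hne
      · obtain ⟨a1, a3, a4, a5, b3, b4⟩ := hav₅ f hf v hv
        rcases Sym2.mem_iff.mp hu with rfl | rfl
        · exact ⟨fun h => a3 h.symm, b3⟩
        · exact ⟨fun h => a4 h.symm, b4⟩
      · obtain ⟨a1, a3, a4, a5, b3, b4⟩ := hav₅ e he u hu
        rcases Sym2.mem_iff.mp hv with rfl | rfl
        · exact ⟨a3, fun h => b3 h.symm⟩
        · exact ⟨a4, fun h => b4 h.symm⟩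
      · exact hL₅.1.1.2 e he f hf hne u hu v hv
  have hMmax : IsMaximalInducedMatching G (insert s(v₃, v₄) L₅) := by
    refine ⟨hMind, fun N' hN' hsub => Set.Subset.antisymm ?_ hsub⟩
    intro e he
    by_cases heM : e ∈ insert s(v₃, v₄) L₅
    · exact heM
    exfalso
    have hne34 : e ≠ s(v₃, v₄) := fun h => heM (h ▸ Set.mem_insert _ _)
    have hcpt := hN'.2 e he s(v₃, v₄) (hsub (Set.mem_insert _ _)) hne34
    have hkey : ∀ u ∈ e, u ≠ v₁ ∧ u ≠ v₃ ∧ u ≠ v₄ ∧ u ≠ v₅ ∧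
        ¬ G.Adj v₃ u ∧ ¬ G.Adj v₄ u := by
      intro u hu
      have h3 := hcpt u hu v₃ (by simp)
      have h4 := hcpt u hu v₄ (by simp)
      refine ⟨?_, h3.1, h4.1, ?_, fun h => h3.2 h.symm, fun h => h4.2 h.symm⟩
      · intro hu1
        obtain ⟨w, hw⟩ := Sym2.mem_iff_exists.mp hu
        have hadj : G.Adj u w := G.mem_edgeSet.mp (hw ▸ hN'.1 he)
        rw [hu1] at hadj
        have hw2 : w = v₂ := hN1 w hadj
        have hv2 : v₂ ∈ e := by rw [hw, ← hw2]; simp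
        exact (hcpt v₂ hv2 v₃ (by simp)).2 h23
      · intro hu5
        obtain ⟨w, hw⟩ := Sym2.mem_iff_exists.mp hu
        have hadj : G.Adj u w := G.mem_edgeSet.mp (hw ▸ hN'.1 he)
        rw [hu5] at hadj
        have hw4 : w = v₄ := hN5 w hadj
        have hv4 : v₄ ∈ e := by rw [hw, ← hw4]; simp
        exact (hcpt v₄ hv4 v₄ (by simp)).1 rfl
    have hPins : P₅ (insert e L₅) := by
      refine ⟨hN'.anti ?_, ?_⟩
      · intro f hf
        rcases hf with rfl | hf
        · exact he
        · exact hsub (Set.mem_insert_iff.mpr (Or.inr hf))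
      · rintro f (rfl | hf)
        · exact hkey
        · exact hav₅ f hf
    exact heM (Set.mem_insert_iff.mpr (Or.inr
      (hL₅.2 hPins (Set.subset_insert _ _) (Set.mem_insert _ _))))
  -- N = L₂ ∪ {v₁v₂, v₄v₅} is a maximal induced matching
  have hsp : ∀ u ∈ s(v₁, v₂), ∀ v ∈ s(v₄, v₅), u ≠ v ∧ ¬ G.Adj u v := by
    intro u hu v hv
    rcases Sym2.mem_iff.mp hu with rfl | rfl <;> rcases Sym2.mem_iff.mp hv with rfl | rfl
    · exact ⟨n14, fun h => n24 (hN1 _ h).symm⟩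
    · exact ⟨n15, fun h => n25 (hN1 _ h).symm⟩
    · exact ⟨n24, fun h => (hN2 _ h).elim (fun h' => n14 h'.symm) (fun h' => n34 h'.symm)⟩
    · exact ⟨n25, fun h => (hN2 _ h).elim (fun h' => n15 h'.symm) (fun h' => n35 h'.symm)⟩
  have hspL : ∀ u, (u = v₁ ∨ u = v₂ ∨ u = v₄ ∨ u = v₅) → ∀ v,
      (v ≠ v₁ ∧ v ≠ v₂ ∧ v ≠ v₃ ∧ v ≠ v₄ ∧ v ≠ v₅ ∧ ¬ G.Adj v₄ v) →
      u ≠ v ∧ ¬ G.Adj u v := by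
    rintro u (rfl | rfl | rfl | rfl) v ⟨a1, a2, a3, a4, a5, b4⟩
    · exact ⟨fun h => a1 h.symm, fun h => a2 (hN1 _ h)⟩
    · exact ⟨fun h => a2 h.symm,
        fun h => (hN2 _ h).elim (fun h' => a1 h') (fun h' => a3 h')⟩
    · exact ⟨fun h => a4 h.symm, b4⟩
    · exact ⟨fun h => a5 h.symm, fun h => a4 (hN5 _ h)⟩
  have hNind : IsInducedMatching G (insert s(v₁, v₂) (insert s(v₄, v₅) L₂)) := by
    constructor
    · rintro e (rfl | rfl | he)
      · exact G.mem_edgeSet.mpr h12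
      · exact G.mem_edgeSet.mpr h45
      · exact hL₂.1.1.1 he
    · rintro e (rfl | rfl | he) f (rfl | rfl | hf) hne u hu v hv
      · exact absurd rfl hne
      · exact hsp u hu v hv
      · obtain hv' := hav₂ f hf v hv
        refine hspL u ?_ v hv'
        rcases Sym2.mem_iff.mp hu with rfl | rfl
        · exact Or.inl rfl
        · exact Or.inr (Or.inl rfl)
      · obtain ⟨h1, h2⟩ := hsp v hv u hu
        exact ⟨h1.symm, fun h => h2 h.symm⟩
      · exact absurd rfl hne
      · obtain hv' := hav₂ f hf v hv
        refine hspL u ?_ v hv'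
        rcases Sym2.mem_iff.mp hu with rfl | rfl
        · exact Or.inr (Or.inr (Or.inl rfl))
        · exact Or.inr (Or.inr (Or.inr rfl))
      · obtain hu' := hav₂ e he u hu
        have := hspL v (by rcases Sym2.mem_iff.mp hv with rfl | rfl
                           · exact Or.inl rfl
                           · exact Or.inr (Or.inl rfl)) u hu'
        exact ⟨this.1.symm, fun h => this.2 h.symm⟩
      · obtain hu' := hav₂ e he u hu
        have := hspL v (by rcases Sym2.mem_iff.mp hv with rfl | rfl
                           · exact Or.inr (Or.inr (Or.inl rfl))
                           · exact Or.inr (Or.inr (Or.inr rfl))) u hu'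
        exact ⟨this.1.symm, fun h => this.2 h.symm⟩
      · exact hL₂.1.1.2 e he f hf hne u hu v hv
  have hNmax : IsMaximalInducedMatching G (insert s(v₁, v₂) (insert s(v₄, v₅) L₂)) := by
    refine ⟨hNind, fun N' hN' hsub => Set.Subset.antisymm ?_ hsub⟩
    intro e he
    by_cases heN : e ∈ insert s(v₁, v₂) (insert s(v₄, v₅) L₂)
    · exact heN
    exfalso
    have hne12 : e ≠ s(v₁, v₂) := fun h => heN (h ▸ Set.mem_insert _ _)
    have hne45 : e ≠ s(v₄, v₅) := fun h =>
      heN (h ▸ Set.mem_insert_iff.mpr (Or.inr (Set.mem_insert _ _)))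
    have hcpt12 := hN'.2 e he s(v₁, v₂) (hsub (Set.mem_insert _ _)) hne12
    have hcpt45 := hN'.2 e he s(v₄, v₅)
      (hsub (Set.mem_insert_iff.mpr (Or.inr (Set.mem_insert _ _)))) hne45
    have hkey : ∀ u ∈ e,
        u ≠ v₁ ∧ u ≠ v₂ ∧ u ≠ v₃ ∧ u ≠ v₄ ∧ u ≠ v₅ ∧ ¬ G.Adj v₄ u := by
      intro u hu
      have h1 := hcpt12 u hu v₁ (by simp)
      have h2 := hcpt12 u hu v₂ (by simp)
      have h4 := hcpt45 u hu v₄ (by simp)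
      have h5 := hcpt45 u hu v₅ (by simp)
      refine ⟨h1.1, h2.1, ?_, h4.1, h5.1, fun h => h4.2 h.symm⟩
      rintro rfl
      exact h2.2 h23.symm
    have hPins : P₂ (insert e L₂) := by
      refine ⟨hN'.anti ?_, ?_, hL₅sub.trans (Set.subset_insert _ _)⟩
      · intro f hf
        rcases hf with rfl | hf
        · exact he
        · exact hsub (Set.mem_insert_iff.mpr (Or.inr (Set.mem_insert_iff.mpr (Or.inr hf))))
      · rintro f (rfl | hf)
        · exact hkey
        · exact hav₂ f hf
    exact heN (Set.mem_insert_iff.mpr (Or.inr (Set.mem_insert_iff.mpr (Or.inr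
      (hL₂.2 hPins (Set.subset_insert _ _) (Set.mem_insert _ _))))))
  -- cardinality contradiction
  have h34nL₅ : s(v₃, v₄) ∉ L₅ := fun h => (hav₅ _ h v₃ (by simp)).2.1 rfl
  have h45nL₂ : s(v₄, v₅) ∉ L₂ := fun h => (hav₂ _ h v₄ (by simp)).2.2.2.1 rfl
  have h12nIns : s(v₁, v₂) ∉ insert s(v₄, v₅) L₂ := by
    rintro (h | h)
    · rcases Sym2.eq_iff.mp h with ⟨h1, -⟩ | ⟨h1, -⟩
      · exact n14 h1
      · exact n15 h1
    · exact (hav₂ _ h v₁ (by simp)).1 rfl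
  have hMcard : (insert s(v₃, v₄) L₅).ncard = L₅.ncard + 1 :=
    Set.ncard_insert_of_notMem h34nL₅ (Set.toFinite _)
  have hNcard : (insert s(v₁, v₂) (insert s(v₄, v₅) L₂)).ncard = L₂.ncard + 2 := by
    rw [Set.ncard_insert_of_notMem h12nIns (Set.toFinite _),
      Set.ncard_insert_of_notMem h45nL₂ (Set.toFinite _)]
  have hle : L₅.ncard ≤ L₂.ncard := Set.ncard_le_ncard hL₂.1.2.2 (Set.toFinite _)
  have heq := hwim _ _ hMmax hNmax
  rw [hMcard, hNcard] at heq
  omega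
end

section
/- Let G be a graph. If G contains a path v1 v2 v3 v4 v5 v6 on six distinct vertices (consecutive vertices adjacent) such that v1 and v6 have degree 1 in G and v2 and v5 have degree 2 in G, then G is not well-indumatched. -/
open SimpleGraph

/-- Every induced matching of a graph on a finite vertex type extends to a maximal one. -/
lemma exists_max_indmatching {V : Type*} [Finite V] (G : SimpleGraph V) (M : Set (Sym2 V))
    (hM : IsInducedMatching G M) : ∃ N, M ⊆ N ∧ IsMaximalInducedMatching G N := by
  obtain ⟨N, hN, hmax⟩ := Set.Finite.exists_maximalFor id
    {N | IsInducedMatching G N ∧ M ⊆ N} (Set.toFinite _) ⟨M, hM, subset_rfl⟩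
  exact ⟨N, hN.2, hN.1, fun N' hN' hsub => (hmax ⟨hN', hN.2.trans hsub⟩ hsub).antisymm hsub⟩

/-- If `G` contains a path `v₁ v₂ v₃ v₄ v₅ v₆` on six distinct vertices with
`deg v₁ = deg v₆ = 1` and `deg v₂ = deg v₅ = 2`, then `G` is not well-indumatched. -/
theorem stmt_7 {V : Type*} [Fintype V] (G : SimpleGraph V) [DecidableRel G.Adj]
    (v₁ v₂ v₃ v₄ v₅ v₆ : V) (hnodup : List.Nodup [v₁, v₂, v₃, v₄, v₅, v₆])
    (h12 : G.Adj v₁ v₂) (h23 : G.Adj v₂ v₃) (h34 : G.Adj v₃ v₄) (h45 : G.Adj v₄ v₅)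
    (h56 : G.Adj v₅ v₆)
    (hd1 : G.degree v₁ = 1) (hd6 : G.degree v₆ = 1)
    (hd2 : G.degree v₂ = 2) (hd5 : G.degree v₅ = 2) :
    ¬ WellIndumatched G := by
  intro hW
  classical
  simp only [List.nodup_cons, List.mem_cons, List.not_mem_nil, or_false, not_or,
    List.nodup_nil, and_true] at hnodup
  obtain ⟨⟨n12, n13, n14, n15, n16⟩, ⟨n23, n24, n25, n26⟩, ⟨n34, n35, n36⟩, ⟨n45, n46⟩, n56, -⟩ :=
    hnodup
  -- neighborhood facts from the degree hypotheses
  have nb1 : ∀ x, G.Adj v₁ x → x = v₂ := by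
    intro x hx
    obtain ⟨c, hc⟩ := Finset.card_eq_one.1 (hd1 : (G.neighborFinset v₁).card = 1)
    have h2 : v₂ ∈ G.neighborFinset v₁ := (G.mem_neighborFinset _ _).2 h12
    have hx' : x ∈ G.neighborFinset v₁ := (G.mem_neighborFinset _ _).2 hx
    rw [hc, Finset.mem_singleton] at h2 hx'
    rw [hx', h2]
  have nb6 : ∀ x, G.Adj v₆ x → x = v₅ := by
    intro x hx
    obtain ⟨c, hc⟩ := Finset.card_eq_one.1 (hd6 : (G.neighborFinset v₆).card = 1)
    have h2 : v₅ ∈ G.neighborFinset v₆ := (G.mem_neighborFinset _ _).2 h56.symm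
    have hx' : x ∈ G.neighborFinset v₆ := (G.mem_neighborFinset _ _).2 hx
    rw [hc, Finset.mem_singleton] at h2 hx'
    rw [hx', h2]
  have nb2 : ∀ x, G.Adj v₂ x → x = v₁ ∨ x = v₃ := by
    intro x hx
    have hsub : ({v₁, v₃} : Finset V) ⊆ G.neighborFinset v₂ := by
      intro y hy
      simp only [Finset.mem_insert, Finset.mem_singleton] at hy
      rcases hy with rfl | rfl
      · exact (G.mem_neighborFinset _ _).2 h12.symm
      · exact (G.mem_neighborFinset _ _).2 h23
    have hcard : ({v₁, v₃} : Finset V).card = 2 := by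
      rw [Finset.card_insert_of_notMem (by simp [n13]), Finset.card_singleton]
    have heq : ({v₁, v₃} : Finset V) = G.neighborFinset v₂ :=
      Finset.eq_of_subset_of_card_le hsub (by rw [hcard]; exact (hd2 :
        (G.neighborFinset v₂).card = 2).le)
    have hx' : x ∈ G.neighborFinset v₂ := (G.mem_neighborFinset _ _).2 hx
    rw [← heq] at hx'
    simpa using hx'
  have nb5 : ∀ x, G.Adj v₅ x → x = v₄ ∨ x = v₆ := by
    intro x hx
    have hsub : ({v₄, v₆} : Finset V) ⊆ G.neighborFinset v₅ := by
      intro y hy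
      simp only [Finset.mem_insert, Finset.mem_singleton] at hy
      rcases hy with rfl | rfl
      · exact (G.mem_neighborFinset _ _).2 h45.symm
      · exact (G.mem_neighborFinset _ _).2 h56
    have hcard : ({v₄, v₆} : Finset V).card = 2 := by
      rw [Finset.card_insert_of_notMem (by simp [n46]), Finset.card_singleton]
    have heq : ({v₄, v₆} : Finset V) = G.neighborFinset v₅ :=
      Finset.eq_of_subset_of_card_le hsub (by rw [hcard]; exact (hd5 :
        (G.neighborFinset v₅).card = 2).le)
    have hx' : x ∈ G.neighborFinset v₅ := (G.mem_neighborFinset _ _).2 hx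
    rw [← heq] at hx'
    simpa using hx'
  have edge_mem : ∀ f ∈ G.edgeSet, ∀ v ∈ f, ∃ w, f = s(v, w) ∧ G.Adj v w := by
    intro f hf v hv
    obtain ⟨w, rfl⟩ := Sym2.mem_iff_exists.1 hv
    exact ⟨w, rfl, G.mem_edgeSet.1 hf⟩
  -- the three relevant edges
  set e : Sym2 V := s(v₃, v₄) with he
  set a : Sym2 V := s(v₁, v₂) with ha
  set b : Sym2 V := s(v₅, v₆) with hb
  have hane : a ≠ e := by
    intro h
    have : v₁ ∈ e := h ▸ (by simp [ha])
    simp only [he, Sym2.mem_iff] at this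
    rcases this with h' | h' <;> [exact n13 h'; exact n14 h']
  have hbne : b ≠ e := by
    intro h
    have : v₅ ∈ e := h ▸ (by simp [hb])
    simp only [he, Sym2.mem_iff] at this
    rcases this with h' | h' <;> [exact n35 h'.symm; exact n45 h'.symm]
  have hab : a ≠ b := by
    intro h
    have : v₁ ∈ b := h ▸ (by simp [ha])
    simp only [hb, Sym2.mem_iff] at this
    rcases this with h' | h' <;> [exact n15 h'; exact n16 h']
  -- maximal induced matching M containing e
  have hsingle : IsInducedMatching G {e} := by
    refine ⟨by simp [he, G.mem_edgeSet, h34], ?_⟩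
    intro e₁ he₁ e₂ he₂ hne
    simp only [Set.mem_singleton_iff] at he₁ he₂
    exact absurd (he₁.trans he₂.symm) hne
  obtain ⟨M, hsubM, hMmax⟩ := exists_max_indmatching G {e} hsingle
  have heM : e ∈ M := hsubM rfl
  have hMedge : M ⊆ G.edgeSet := hMmax.1.1
  have hMind := hMmax.1.2
  have hv3e : v₃ ∈ e := by simp [he]
  have hv4e : v₄ ∈ e := by simp [he]
  -- the endpoints v₁, v₂, v₅, v₆ are untouched by edges of M other than e
  have hv2 : ∀ f ∈ M, f ≠ e → v₂ ∉ f := fun f hf hne hv =>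
    (hMind f hf e heM hne v₂ hv v₃ hv3e).2 h23
  have hv5 : ∀ f ∈ M, f ≠ e → v₅ ∉ f := fun f hf hne hv =>
    (hMind f hf e heM hne v₅ hv v₄ hv4e).2 h45.symm
  have hv1 : ∀ f ∈ M, f ≠ e → v₁ ∉ f := by
    intro f hf hne hv
    obtain ⟨w, hfe, hw⟩ := edge_mem f (hMedge hf) v₁ hv
    have hwv : w = v₂ := nb1 w hw
    exact hv2 f hf hne (by rw [hfe, hwv]; simp)
  have hv6 : ∀ f ∈ M, f ≠ e → v₆ ∉ f := by
    intro f hf hne hv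
    obtain ⟨w, hfe, hw⟩ := edge_mem f (hMedge hf) v₆ hv
    have hwv : w = v₅ := nb6 w hw
    exact hv5 f hf hne (by rw [hfe, hwv]; simp)
  have haM : a ∉ M := fun h => hv1 a h hane (by simp [ha])
  have hbM : b ∉ M := fun h => hv5 b h hbne (by simp [hb])
  -- key separation lemma
  have key : ∀ f ∈ M \ {e}, ∀ w ∈ f,
      (w ≠ v₁ ∧ ¬G.Adj w v₁) ∧ (w ≠ v₂ ∧ ¬G.Adj w v₂) ∧
      (w ≠ v₅ ∧ ¬G.Adj w v₅) ∧ (w ≠ v₆ ∧ ¬G.Adj w v₆) := by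
    rintro f ⟨hf, hfe⟩ w hw
    have hfe' : f ≠ e := hfe
    refine ⟨⟨?_, ?_⟩, ⟨?_, ?_⟩, ⟨?_, ?_⟩, ⟨?_, ?_⟩⟩
    · rintro rfl; exact hv1 f hf hfe' hw
    · intro hadj
      rw [nb1 w hadj.symm] at hw
      exact hv2 f hf hfe' hw
    · rintro rfl; exact hv2 f hf hfe' hw
    · intro hadj
      rcases nb2 w hadj.symm with h' | h' <;> rw [h'] at hw
      · exact hv1 f hf hfe' hw
      · exact (hMind f hf e heM hfe' v₃ hw v₃ hv3e).1 rfl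
    · rintro rfl; exact hv5 f hf hfe' hw
    · intro hadj
      rcases nb5 w hadj.symm with h' | h' <;> rw [h'] at hw
      · exact (hMind f hf e heM hfe' v₄ hw v₄ hv4e).1 rfl
      · exact hv6 f hf hfe' hw
    · rintro rfl; exact hv6 f hf hfe' hw
    · intro hadj
      rw [nb6 w hadj.symm] at hw
      exact hv5 f hf hfe' hw
  -- endpoints of a vs endpoints of b
  have hab' : ∀ u ∈ a, ∀ w ∈ b, u ≠ w ∧ ¬G.Adj u w := by
    intro u hu w hw
    simp only [ha, Sym2.mem_iff] at hu
    simp only [hb, Sym2.mem_iff] at hw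
    have na15 : ¬ G.Adj v₁ v₅ := fun h => n25 (nb1 _ h).symm
    have na16 : ¬ G.Adj v₁ v₆ := fun h => n26 (nb1 _ h).symm
    have na25 : ¬ G.Adj v₂ v₅ := fun h =>
      (nb2 _ h).elim (fun h' => n15 h'.symm) (fun h' => n35 h'.symm)
    have na26 : ¬ G.Adj v₂ v₆ := fun h =>
      (nb2 _ h).elim (fun h' => n16 h'.symm) (fun h' => n36 h'.symm)
    rcases hu with rfl | rfl <;> rcases hw with rfl | rfl
    exacts [⟨n15, na15⟩, ⟨n16, na16⟩, ⟨n25, na25⟩, ⟨n26, na26⟩]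
  -- the new, bigger induced matching
  set M' : Set (Sym2 V) := insert a (insert b (M \ {e})) with hM'
  have hM'ind : IsInducedMatching G M' := by
    constructor
    · intro f hf
      simp only [hM', Set.mem_insert_iff] at hf
      rcases hf with rfl | rfl | ⟨hf, _⟩
      · exact G.mem_edgeSet.2 h12
      · exact G.mem_edgeSet.2 h56
      · exact hMedge hf
    · intro e₁ he₁ e₂ he₂ hne u hu w hw
      simp only [hM', Set.mem_insert_iff] at he₁ he₂
      rcases he₁ with rfl | rfl | hf1 <;> rcases he₂ with rfl | rfl | hf2
      · exact absurd rfl hne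
      · exact hab' u hu w hw
      · -- u ∈ a, w ∈ f ∈ M \ {e}
        have := key e₂ hf2 w hw
        simp only [ha, Sym2.mem_iff] at hu
        rcases hu with rfl | rfl
        · exact ⟨fun h => this.1.1 h.symm, fun h => this.1.2 h.symm⟩
        · exact ⟨fun h => this.2.1.1 h.symm, fun h => this.2.1.2 h.symm⟩
      · obtain ⟨h1, h2⟩ := hab' w hw u hu
        exact ⟨h1.symm, fun h => h2 h.symm⟩
      · exact absurd rfl hne
      · have := key e₂ hf2 w hw
        simp only [hb, Sym2.mem_iff] at hu
        rcases hu with rfl | rfl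
        · exact ⟨fun h => this.2.2.1.1 h.symm, fun h => this.2.2.1.2 h.symm⟩
        · exact ⟨fun h => this.2.2.2.1 h.symm, fun h => this.2.2.2.2 h.symm⟩
      · have := key e₁ hf1 u hu
        simp only [ha, Sym2.mem_iff] at hw
        rcases hw with rfl | rfl
        · exact this.1
        · exact this.2.1
      · have := key e₁ hf1 u hu
        simp only [hb, Sym2.mem_iff] at hw
        rcases hw with rfl | rfl
        · exact this.2.2.1
        · exact this.2.2.2
      · exact hMind e₁ hf1.1 e₂ hf2.1 hne u hu w hw
  obtain ⟨N, hsubN, hNmax⟩ := exists_max_indmatching G M' hM'ind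
  have hcardMN := hW M N hMmax hNmax
  have card1 : (M \ {e}).ncard + 1 = M.ncard := Set.ncard_diff_singleton_add_one heM
  have hbnot : b ∉ M \ {e} := fun h => hbM h.1
  have hanot : a ∉ insert b (M \ {e}) := by
    rintro (h | h)
    · exact hab h
    · exact haM h.1
  have card2 : M'.ncard = M.ncard + 1 := by
    rw [hM', Set.ncard_insert_of_notMem hanot, Set.ncard_insert_of_notMem hbnot]
    omega
  have hle : M'.ncard ≤ N.ncard := Set.ncard_le_ncard hsubN
  omega
end

section
/- Let G be a graph and let M be a matching of G such that (i) every edge of G is covered by exactly one edge of M, and (ii) whenever two edges e1 and e2 of G are covered by the same edge of M, e1 covers e2. Then G is well-indumatched, and moreover every maximal induced matching of G has size |M|. -/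
open SimpleGraph

/-- Let `M` be a matching of `G` such that (i) every edge of `G` is covered by exactly
one edge of `M`, and (ii) any two edges covered by the same edge of `M` cover each
other. Then `G` is well-indumatched and every maximal induced matching has size `|M|`. -/
theorem stmt_9 {V : Type*} [Fintype V] (G : SimpleGraph V) (M : Set (Sym2 V))
    (hMsub : M ⊆ G.edgeSet)
    (hMmatch : ∀ e ∈ M, ∀ f ∈ M, e ≠ f → ∀ u ∈ e, u ∉ f)
    (hcov : ∀ f ∈ G.edgeSet, ∃! e, e ∈ M ∧ EdgeCovers G e f)
    (hcov2 : ∀ e₀ ∈ M, ∀ e₁ ∈ G.edgeSet, ∀ e₂ ∈ G.edgeSet,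
      EdgeCovers G e₀ e₁ → EdgeCovers G e₀ e₂ → EdgeCovers G e₁ e₂) :
    WellIndumatched G ∧
      ∀ N : Set (Sym2 V), IsMaximalInducedMatching G N → N.ncard = M.ncard := by
  classical
  have main : ∀ N : Set (Sym2 V), IsMaximalInducedMatching G N → N.ncard = M.ncard := by
    intro N hN
    obtain ⟨⟨hNsub, hNind⟩, hNmax⟩ := hN
    set φ : Sym2 V → Sym2 V := fun f =>
      if h : f ∈ G.edgeSet then (hcov f h).choose else f with hφdef
    have hφ1 : ∀ f ∈ G.edgeSet, φ f ∈ M ∧ EdgeCovers G (φ f) f := by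
      intro f hf
      simp only [hφdef, dif_pos hf]
      exact (hcov f hf).choose_spec.1
    have hφ2 : ∀ f ∈ G.edgeSet, ∀ e, e ∈ M ∧ EdgeCovers G e f → e = φ f := by
      intro f hf e he
      simp only [hφdef, dif_pos hf]
      exact (hcov f hf).choose_spec.2 e he
    have hself : ∀ e : Sym2 V, EdgeCovers G e e := by
      intro e
      induction e using Sym2.ind with
      | _ x y => exact ⟨x, Sym2.mem_mk_left x y, x, Sym2.mem_mk_left x y, Or.inl rfl⟩
    have hMfix : ∀ e ∈ M, φ e = e := fun e he =>
      (hφ2 e (hMsub he) e ⟨he, hself e⟩).symm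
    have hinj : Set.InjOn φ N := by
      intro f₁ h₁ f₂ h₂ hφeq
      by_contra hne
      have hcf₁ := hφ1 f₁ (hNsub h₁)
      have hcf₂ := hφ1 f₂ (hNsub h₂)
      rw [hφeq] at hcf₁
      obtain ⟨u, hu, w, hw, hor⟩ :=
        hcov2 (φ f₂) hcf₂.1 f₁ (hNsub h₁) f₂ (hNsub h₂) hcf₁.2 hcf₂.2
      have hni := hNind f₁ h₁ f₂ h₂ hne u hu w hw
      rcases hor with h | h
      · exact hni.1 h
      · exact hni.2 h
    have himg : φ '' N = M := by
      apply Set.Subset.antisymm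
      · rintro _ ⟨f, hf, rfl⟩
        exact (hφ1 f (hNsub hf)).1
      · intro e he
        by_contra hni
        have heG : e ∈ G.edgeSet := hMsub he
        have heN : e ∉ N := fun h => hni ⟨e, h, hMfix e he⟩
        have hcovimp : ∀ f ∈ N, ¬ EdgeCovers G e f := by
          intro f hf hc
          exact hni ⟨f, hf, (hφ2 f (hNsub hf) e ⟨he, hc⟩).symm⟩
        have hind' : IsInducedMatching G (insert e N) := by
          refine ⟨?_, ?_⟩
          · intro x hx
            rcases Set.mem_insert_iff.1 hx with rfl | hx
            · exact heG
            · exact hNsub hx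
          · intro a ha b hb hab u hu v hv
            rcases Set.mem_insert_iff.1 ha with hae | ha <;>
              rcases Set.mem_insert_iff.1 hb with hbe | hb
            · exact absurd (hae.trans hbe.symm) hab
            · have hu' : u ∈ e := hae ▸ hu
              constructor
              · rintro rfl; exact hcovimp b hb ⟨u, hu', u, hv, Or.inl rfl⟩
              · intro hadj; exact hcovimp b hb ⟨u, hu', v, hv, Or.inr hadj⟩
            · have hv' : v ∈ e := hbe ▸ hv
              constructor
              · rintro rfl; exact hcovimp a ha ⟨u, hv', u, hu, Or.inl rfl⟩
              · intro hadj; exact hcovimp a ha ⟨v, hv', u, hu, Or.inr hadj.symm⟩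
            · exact hNind a ha b hb hab u hu v hv
        have heq := hNmax (insert e N) hind' (Set.subset_insert e N)
        exact heN (heq ▸ Set.mem_insert e N)
    rw [← himg, Set.ncard_image_of_injOn hinj]
  exact ⟨fun A B hA hB => (main A hA).trans (main B hB).symm, main⟩
end
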